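/- arXiv:2212.03652 — 12 statements merged into one kernel-verified Lean document; each statement's English description precedes it below -/
import Mathlib

section
/- Let (X,T) be a dynamical system on a second-countable Hausdorff topological space X. Then T is topologically quasi-rigid if and only if, for every N ∈ ℕ, the N-fold product map T_(N) : X^N → X^N is topologically recurrent. -/
open Filter Topology Set

/-- The `N`-fold product map `T × ⋯ × T` on `X^N`. -/
def prodMap {X : Type*} (T : X → X) (N : ℕ) : (Fin N → X) → (Fin N → X) :=
  fun x i => T (x i)

/-- `T` is topologically recurrent: for every non-empty open `U` there is `n ≥ 1`
with `T^n(U) ∩ U ≠ ∅`. -/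
def TopologicallyRecurrent {X : Type*} [TopologicalSpace X] (T : X → X) : Prop :=
  ∀ U : Set X, IsOpen U → U.Nonempty → ∃ n : ℕ, 1 ≤ n ∧ (T^[n] '' U ∩ U).Nonempty

/-- `T` is topologically quasi-rigid: there is a strictly increasing sequence `(n_k)` of
positive integers such that for every non-empty open `U` there is `k_U` with
`T^{n_k}(U) ∩ U ≠ ∅` for all `k ≥ k_U`. -/
def TopologicallyQuasiRigid {X : Type*} [TopologicalSpace X] (T : X → X) : Prop :=
  ∃ nk : ℕ → ℕ, StrictMono nk ∧ (∀ k, 1 ≤ nk k) ∧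
    ∀ U : Set X, IsOpen U → U.Nonempty →
      ∃ kU : ℕ, ∀ k ≥ kU, (T^[nk k] '' U ∩ U).Nonempty

lemma prodMap_iterate {X : Type*} (T : X → X) (N n : ℕ) (x : Fin N → X) :
    (prodMap T N)^[n] x = fun i => T^[n] (x i) := by
  induction n with
  | zero => rfl
  | succ n ih =>
    funext i
    rw [Function.iterate_succ_apply', ih]
    simp [prodMap, Function.iterate_succ_apply']

lemma prodMap_continuous {X : Type*} [TopologicalSpace X] {T : X → X} (hT : Continuous T)
    (N : ℕ) : Continuous (prodMap T N) :=
  continuous_pi fun i => hT.comp (continuous_apply i)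

lemma exists_large_return {Y : Type*} [TopologicalSpace Y] {S : Y → Y} (hS : Continuous S)
    (hrec : TopologicallyRecurrent S) (U : Set Y) (hU : IsOpen U) (hne : U.Nonempty) :
    ∀ L : ℕ, ∃ n > L, (S^[n] '' U ∩ U).Nonempty := by
  intro L
  induction L with
  | zero =>
    obtain ⟨n, hn1, h⟩ := hrec U hU hne
    exact ⟨n, hn1, h⟩
  | succ L ih =>
    obtain ⟨n, hnL, w, ⟨x, hxU, rfl⟩, hwU⟩ := ih
    have hVopen : IsOpen (U ∩ S^[n] ⁻¹' U) := hU.inter (hU.preimage (hS.iterate n))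
    have hVne : (U ∩ S^[n] ⁻¹' U).Nonempty := ⟨x, hxU, hwU⟩
    obtain ⟨m, hm1, z, ⟨y, hyV, rfl⟩, hzV⟩ := hrec _ hVopen hVne
    refine ⟨n + m, by omega, S^[n + m] y, ⟨y, hyV.1, rfl⟩, ?_⟩
    rw [Function.iterate_add_apply]
    exact hzV.2

/-- For a dynamical system on a second-countable Hausdorff space, `T` is topologically
quasi-rigid iff every `N`-fold product `T_(N)` is topologically recurrent. -/
theorem stmt0 {X : Type*} [TopologicalSpace X] [T2Space X] [SecondCountableTopology X]
    (T : X → X) (hT : Continuous T) :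
    TopologicallyQuasiRigid T ↔
      ∀ N : ℕ, 1 ≤ N → TopologicallyRecurrent (prodMap T N) := by
  constructor
  · rintro ⟨nk, hmono, hpos, hQR⟩ N _ U hU hne
    obtain ⟨x, hx⟩ := hne
    obtain ⟨I, u, hu, hIU⟩ := isOpen_pi_iff.mp hU x hx
    set u' : Fin N → Set X := fun i => if i ∈ I then u i else univ with hu'
    have hu'open : ∀ i, IsOpen (u' i) := by
      intro i; simp only [hu']; split
      · exact (hu i ‹_›).1
      · exact isOpen_univ
    have hu'ne : ∀ i, (u' i).Nonempty := by
      intro i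
      refine ⟨x i, ?_⟩
      simp only [hu']; split
      · exact (hu i ‹_›).2
      · trivial
    have h : ∀ i : Fin N, ∃ kU, ∀ k ≥ kU, (T^[nk k] '' u' i ∩ u' i).Nonempty :=
      fun i => hQR (u' i) (hu'open i) (hu'ne i)
    choose kf hkf using h
    set K := Finset.univ.sup kf with hK
    have h2 : ∀ i, ∃ y, y ∈ u' i ∧ T^[nk K] y ∈ u' i := by
      intro i
      obtain ⟨w, ⟨y, hy, rfl⟩, hw⟩ := hkf i K (Finset.le_sup (Finset.mem_univ i))
      exact ⟨y, hy, hw⟩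
    choose y hy1 hy2 using h2
    have hyI : y ∈ (↑I : Set (Fin N)).pi u := by
      intro i hi
      have := hy1 i
      simpa only [hu', if_pos (by simpa using hi)] using this
    have hTyI : (fun i => T^[nk K] (y i)) ∈ (↑I : Set (Fin N)).pi u := by
      intro i hi
      have := hy2 i
      simpa only [hu', if_pos (by simpa using hi)] using this
    refine ⟨nk K, hpos K, (prodMap T N)^[nk K] y, ⟨y, hIU hyI, rfl⟩, ?_⟩
    rw [prodMap_iterate]
    exact hIU hTyI
  · intro hrec
    rcases isEmpty_or_nonempty X with hE | hNE
    · refine ⟨fun k => k + 1, fun a b h => Nat.add_lt_add_right h 1, fun k => Nat.le_add_left 1 k, ?_⟩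
      intro U _ hne
      exact (IsEmpty.false hne.some).elim
    · -- countable basis of nonempty sets
      have hB := TopologicalSpace.isBasis_countableBasis X
      have hScount : {s | s ∈ TopologicalSpace.countableBasis X ∧ s.Nonempty}.Countable :=
        (TopologicalSpace.countable_countableBasis X).mono (fun s hs => hs.1)
      have hSne : {s | s ∈ TopologicalSpace.countableBasis X ∧ s.Nonempty}.Nonempty := by
        obtain ⟨v, hv, hxv, _⟩ := hB.exists_subset_of_mem_open (mem_univ hNE.some) isOpen_univ
        exact ⟨v, hv, ⟨_, hxv⟩⟩
      obtain ⟨b, hbrange⟩ := hScount.exists_eq_range hSne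
      have hbmem : ∀ m, b m ∈ TopologicalSpace.countableBasis X ∧ (b m).Nonempty := by
        intro m
        have : b m ∈ {s | s ∈ TopologicalSpace.countableBasis X ∧ s.Nonempty} := by
          rw [hbrange]; exact ⟨m, rfl⟩
        exact this
      have hbopen : ∀ m, IsOpen (b m) :=
        fun m => TopologicalSpace.isOpen_of_mem_countableBasis (hbmem m).1
      have hbne : ∀ m, (b m).Nonempty := fun m => (hbmem m).2
      -- boxes
      have hbox : ∀ k : ℕ,
          IsOpen (Set.pi univ (fun i : Fin (k+1) => b i)) ∧
          (Set.pi univ (fun i : Fin (k+1) => b i)).Nonempty := by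
        intro k
        constructor
        · exact isOpen_set_pi finite_univ (fun i _ => hbopen i)
        · exact univ_pi_nonempty_iff.mpr (fun i => hbne i)
      have H : ∀ k L : ℕ, ∃ n > L,
          ((prodMap T (k+1))^[n] '' (Set.pi univ (fun i : Fin (k+1) => b i)) ∩
            (Set.pi univ (fun i : Fin (k+1) => b i))).Nonempty := by
        intro k L
        exact exists_large_return (prodMap_continuous hT (k+1))
          (hrec (k+1) (by omega)) _ (hbox k).1 (hbox k).2 L
      set seq : ℕ → ℕ := fun k =>
        Nat.rec (H 0 0).choose (fun k ih => (H (k+1) ih).choose) k with hseq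
      have hseq0 : seq 0 = (H 0 0).choose := rfl
      have hseqS : ∀ k, seq (k+1) = (H (k+1) (seq k)).choose := fun k => rfl
      have hstep : ∀ k, seq k < seq (k+1) := by
        intro k
        rw [hseqS]
        exact (H (k+1) (seq k)).choose_spec.1
      have hmono : StrictMono seq := strictMono_nat_of_lt_succ hstep
      have hpos : ∀ k, 1 ≤ seq k := by
        intro k
        have h0 : 1 ≤ seq 0 := (H 0 0).choose_spec.1
        calc 1 ≤ seq 0 := h0
          _ ≤ seq k := hmono.monotone (Nat.zero_le k)
      have hret : ∀ k, ((prodMap T (k+1))^[seq k] '' (Set.pi univ (fun i : Fin (k+1) => b i)) ∩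
          (Set.pi univ (fun i : Fin (k+1) => b i))).Nonempty := by
        intro k
        cases k with
        | zero => exact (H 0 0).choose_spec.2
        | succ k => exact (H (k+1) (seq k)).choose_spec.2
      -- componentwise returns
      have hcomp : ∀ m k : ℕ, m ≤ k → (T^[seq k] '' b m ∩ b m).Nonempty := by
        intro m k hmk
        obtain ⟨w, ⟨y, hy, rfl⟩, hw⟩ := hret k
        rw [prodMap_iterate] at hw
        refine ⟨T^[seq k] (y ⟨m, by omega⟩), ⟨y ⟨m, by omega⟩, ?_, rfl⟩, ?_⟩
        · exact hy ⟨m, by omega⟩ (mem_univ _)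
        · exact hw ⟨m, by omega⟩ (mem_univ _)
      refine ⟨seq, hmono, hpos, ?_⟩
      intro U hU hne
      obtain ⟨x, hx⟩ := hne
      obtain ⟨v, hv, hxv, hvU⟩ := hB.exists_subset_of_mem_open hx hU
      have : v ∈ {s | s ∈ TopologicalSpace.countableBasis X ∧ s.Nonempty} := ⟨hv, ⟨x, hxv⟩⟩
      rw [hbrange] at this
      obtain ⟨m, hm⟩ := this
      refine ⟨m, fun k hk => ?_⟩
      obtain ⟨w, ⟨y, hy, rfl⟩, hw⟩ := hcomp m k hk
      rw [hm] at hy hw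
      exact ⟨T^[seq k] y, ⟨y, hvU hy, rfl⟩, hvU hw⟩
end

section
/- Let (X,T) be a Polish dynamical system, i.e. T is a continuous self-map of a separable completely metrizable topological space X. Then T is quasi-rigid if and only if T is topologically quasi-rigid. -/
open Filter Topology Set Metric

/-- `T` is quasi-rigid: there are a strictly increasing sequence `(n_k)` of positive
integers and a dense set `Y ⊆ X` such that `T^{n_k} y → y` for every `y ∈ Y`. -/
def QuasiRigid {X : Type*} [TopologicalSpace X] (T : X → X) : Prop :=
  ∃ nk : ℕ → ℕ, StrictMono nk ∧ (∀ k, 1 ≤ nk k) ∧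
    ∃ Y : Set X, Dense Y ∧ ∀ y ∈ Y, Tendsto (fun k => T^[nk k] y) atTop (𝓝 y)

private lemma aux_exists {X : Type*} [MetricSpace X] [CompleteSpace X]
    (T : X → X) (hT : Continuous T) (nk : ℕ → ℕ)
    (htop : ∀ U : Set X, IsOpen U → U.Nonempty →
      ∃ kU : ℕ, ∀ k ≥ kU, (T^[nk k] '' U ∩ U).Nonempty)
    (f : ℕ → Set X) (hfo : ∀ i, IsOpen (f i)) (hfne : ∀ i, (f i).Nonempty) :
    ∃ K : ℕ → ℕ, StrictMono K ∧ ∃ y : ℕ → X, (∀ i, y i ∈ f i) ∧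
      ∀ i, Tendsto (fun j => T^[nk (K j)] (y i)) atTop (𝓝 (y i)) := by
  classical
  -- initial balls
  have h0 : ∀ i, ∃ p : X × ℝ, 0 < p.2 ∧ p.2 ≤ 1 ∧ closedBall p.1 p.2 ⊆ f i := by
    intro i
    obtain ⟨x, hx⟩ := hfne i
    obtain ⟨ε, εpos, hε⟩ := Metric.isOpen_iff.1 (hfo i) x hx
    refine ⟨(x, min (ε / 2) 1), lt_min (by linarith) one_pos, min_le_right _ _, ?_⟩
    exact (closedBall_subset_ball (lt_of_le_of_lt (min_le_left _ _) (by linarith))).trans hε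
  choose p0 hp0pos hp0le hp0sub using h0
  -- invariants
  set P : ℕ → ℕ × (ℕ → X) × (ℕ → ℝ) → Prop := fun j s =>
    (∀ i, 0 < s.2.2 i) ∧ (∀ i, closedBall (s.2.1 i) (s.2.2 i) ⊆ f i) ∧
      (∀ i ≤ j, s.2.2 i ≤ (2 : ℝ)⁻¹ ^ j) with hP_def
  set Q : ℕ → ℕ × (ℕ → X) × (ℕ → ℝ) → ℕ × (ℕ → X) × (ℕ → ℝ) → Prop := fun j s s' =>
    s.1 < s'.1 ∧ (∀ i, closedBall (s'.2.1 i) (s'.2.2 i) ⊆ closedBall (s.2.1 i) (s.2.2 i)) ∧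
      (∀ i ≤ j, T^[nk s'.1] '' closedBall (s'.2.1 i) (s'.2.2 i) ⊆ ball (s.2.1 i) (s.2.2 i))
    with hQ_def
  -- the one-step refinement
  have step : ∀ j s, P j s → ∃ s', P (j + 1) s' ∧ Q j s s' := by
    rintro j ⟨K, c, r⟩ ⟨hr, hsub, _⟩
    have hball : ∀ i, ∃ kU : ℕ, ∀ k ≥ kU,
        (T^[nk k] '' ball (c i) (r i) ∩ ball (c i) (r i)).Nonempty := fun i =>
      htop _ isOpen_ball ⟨c i, mem_ball_self (hr i)⟩
    choose kb hkb using hball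
    set K' : ℕ := max (K + 1) ((Finset.range (j + 1)).sup kb) with hK'def
    have hKK' : K < K' := lt_of_lt_of_le (Nat.lt_succ_self K) (le_max_left _ _)
    have hkbK' : ∀ i ≤ j, kb i ≤ K' := fun i hi =>
      le_trans (Finset.le_sup (Finset.mem_range.2 (Nat.lt_succ_of_le hi))) (le_max_right _ _)
    have hstep : ∀ i, ∃ q : X × ℝ, 0 < q.2 ∧ q.2 ≤ (2 : ℝ)⁻¹ ^ (j + 1) ∧
        closedBall q.1 q.2 ⊆ closedBall (c i) (r i) ∧ closedBall q.1 q.2 ⊆ f i ∧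
        (i ≤ j → T^[nk K'] '' closedBall q.1 q.2 ⊆ ball (c i) (r i)) := by
      intro i
      by_cases hij : i ≤ j
      · obtain ⟨z, ⟨v, hv, hvz⟩, hz⟩ := hkb i K' (hkbK' i hij)
        have hzlt : dist z (c i) < r i := mem_ball.1 hz
        have hvlt : dist v (c i) < r i := mem_ball.1 hv
        have hc : Continuous (T^[nk K']) := hT.iterate _
        obtain ⟨δ, δpos, hδ⟩ := Metric.continuous_iff.1 hc v (r i - dist z (c i))
          (by linarith)
        set ρ : ℝ := min (min (δ / 2) ((r i - dist v (c i)) / 2)) ((2 : ℝ)⁻¹ ^ (j + 1))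
          with hρdef
        have hρpos : 0 < ρ :=
          lt_min (lt_min (by linarith) (by linarith)) (by positivity)
        have hρδ : ρ ≤ δ / 2 := le_trans (min_le_left _ _) (min_le_left _ _)
        have hρr : ρ ≤ (r i - dist v (c i)) / 2 :=
          le_trans (min_le_left _ _) (min_le_right _ _)
        have hcb : closedBall v ρ ⊆ ball (c i) (r i) :=
          closedBall_subset_ball' (by linarith)
        refine ⟨(v, ρ), hρpos, min_le_right _ _,
          hcb.trans ball_subset_closedBall, (hcb.trans ball_subset_closedBall).trans (hsub i),
          fun _ => ?_⟩
        rintro w ⟨u, hu, rfl⟩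
        have hu' : dist u v < δ := lt_of_le_of_lt (mem_closedBall.1 hu) (by linarith)
        have := hδ u hu'
        rw [hvz] at this
        have : dist (T^[nk K'] u) (c i) < r i :=
          lt_of_le_of_lt (dist_triangle _ z (c i)) (by linarith)
        exact mem_ball.2 this
      · refine ⟨(c i, min (r i) ((2 : ℝ)⁻¹ ^ (j + 1))),
          lt_min (hr i) (by positivity), min_le_right _ _,
          closedBall_subset_closedBall (min_le_left _ _),
          (closedBall_subset_closedBall (min_le_left _ _)).trans (hsub i),
          fun h => absurd h hij⟩
    choose q hq1 hq2 hq3 hq4 hq5 using hstep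
    exact ⟨(K', fun i => (q i).1, fun i => (q i).2),
      ⟨hq1, hq4, fun i _ => hq2 i⟩, hKK', hq3, fun i hij => hq5 i hij⟩
  choose! next hPnext hQnext using step
  set s0 : ℕ × (ℕ → X) × (ℕ → ℝ) := (0, fun i => (p0 i).1, fun i => (p0 i).2) with hs0def
  set F : ℕ → ℕ × (ℕ → X) × (ℕ → ℝ) := fun j => Nat.rec s0 (fun j s => next j s) j
    with hFdef
  have hF0 : F 0 = s0 := rfl
  have hFsucc : ∀ j, F (j + 1) = next j (F j) := fun j => rfl
  have hPF : ∀ j, P j (F j) := by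
    intro j
    induction j with
    | zero =>
      refine ⟨fun i => hp0pos i, fun i => hp0sub i, fun i _ => ?_⟩
      show (p0 i).2 ≤ (2 : ℝ)⁻¹ ^ 0
      simpa using hp0le i
    | succ j ih => rw [hFsucc]; exact hPnext j (F j) ih
  have hQF : ∀ j, Q j (F j) (F (j + 1)) := by
    intro j
    rw [hFsucc]
    exact hQnext j (F j) (hPF j)
  set K : ℕ → ℕ := fun j => (F j).1 with hKdef
  set c : ℕ → ℕ → X := fun j => (F j).2.1 with hcdef
  set r : ℕ → ℕ → ℝ := fun j => (F j).2.2 with hrdef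
  have hKmono : StrictMono K := strictMono_nat_of_lt_succ fun j => (hQF j).1
  have rpos : ∀ j i, 0 < r j i := fun j i => (hPF j).1 i
  have memf : ∀ j i, closedBall (c j i) (r j i) ⊆ f i := fun j i => (hPF j).2.1 i
  have rbd : ∀ j i, i ≤ j → r j i ≤ (2 : ℝ)⁻¹ ^ j := fun j i h => (hPF j).2.2 i h
  have nest : ∀ j i, closedBall (c (j + 1) i) (r (j + 1) i) ⊆ closedBall (c j i) (r j i) :=
    fun j i => (hQF j).2.1 i
  have himg : ∀ j i, i ≤ j →
      T^[nk (K (j + 1))] '' closedBall (c (j + 1) i) (r (j + 1) i) ⊆ ball (c j i) (r j i) :=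
    fun j i h => (hQF j).2.2 i h
  have nest' : ∀ i j j', j ≤ j' →
      closedBall (c j' i) (r j' i) ⊆ closedBall (c j i) (r j i) := by
    intro i j j' h
    induction j' , h using Nat.le_induction with
    | base => exact subset_rfl
    | succ j' h ih => exact (nest j' i).trans ih
  have cmem : ∀ i j j', j ≤ j' → c j' i ∈ closedBall (c j i) (r j i) := fun i j j' h =>
    nest' i j j' h (mem_closedBall_self (rpos j' i).le)
  have half : Tendsto (fun j : ℕ => (2 : ℝ)⁻¹ ^ j) atTop (𝓝 0) :=
    tendsto_pow_atTop_nhds_zero_of_lt_one (by norm_num) (by norm_num)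
  have hr0 : ∀ i, Tendsto (fun j => r j i) atTop (𝓝 0) := by
    intro i
    refine squeeze_zero' (Eventually.of_forall fun j => (rpos j i).le) ?_ half
    exact eventually_atTop.2 ⟨i, fun j hj => rbd j i hj⟩
  have hy : ∀ i, ∃ y : X, Tendsto (fun j => c j i) atTop (𝓝 y) := by
    intro i
    apply cauchySeq_tendsto_of_complete
    refine cauchySeq_of_le_tendsto_0 (fun N => 2 * r N i) (fun n m N hn hm => ?_)
      (by simpa only [mul_zero] using (hr0 i).const_mul 2)
    have h1 := mem_closedBall.1 (cmem i N n hn)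
    have h2 := mem_closedBall.1 (cmem i N m hm)
    calc dist (c n i) (c m i) ≤ dist (c n i) (c N i) + dist (c N i) (c m i) :=
          dist_triangle _ _ _
      _ ≤ 2 * r N i := by rw [dist_comm (c N i) (c m i)]; linarith
  choose y hylim using hy
  have ymem : ∀ i j, y i ∈ closedBall (c j i) (r j i) := by
    intro i j
    refine isClosed_closedBall.mem_of_tendsto (hylim i) ?_
    exact eventually_atTop.2 ⟨j, fun j' hj' => cmem i j j' hj'⟩
  refine ⟨fun j => K (j + 1), fun a b h => hKmono (Nat.succ_lt_succ h), y,
    fun i => memf 0 i (ymem i 0), fun i => ?_⟩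
  rw [tendsto_iff_dist_tendsto_zero]
  refine squeeze_zero' (Eventually.of_forall fun j => dist_nonneg)
    (eventually_atTop.2 ⟨i, fun j hj => ?_⟩) (by simpa only [mul_zero] using half.const_mul 2)
  have h1 : T^[nk (K (j + 1))] (y i) ∈ ball (c j i) (r j i) :=
    himg j i hj ⟨y i, ymem i (j + 1), rfl⟩
  have h2 := mem_ball.1 h1
  have h3 := mem_closedBall.1 (ymem i j)
  have h4 := rbd j i hj
  calc dist (T^[nk (K (j + 1))] (y i)) (y i)
      ≤ dist (T^[nk (K (j + 1))] (y i)) (c j i) + dist (c j i) (y i) := dist_triangle _ _ _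
    _ ≤ 2 * (2 : ℝ)⁻¹ ^ j := by rw [dist_comm (c j i) (y i)]; linarith

/-- For a Polish dynamical system, quasi-rigidity and topological quasi-rigidity
coincide. -/
theorem stmt1 {X : Type*} [TopologicalSpace X] [PolishSpace X]
    (T : X → X) (hT : Continuous T) :
    QuasiRigid T ↔ TopologicallyQuasiRigid T := by
  constructor
  · rintro ⟨nk, hmono, hpos, Y, hY, hconv⟩
    refine ⟨nk, hmono, hpos, fun U hU hUne => ?_⟩
    obtain ⟨z, hzY, hzU⟩ := hY.exists_mem_open hU hUne
    obtain ⟨kU, hkU⟩ := eventually_atTop.1 ((hconv z hzY).eventually (hU.mem_nhds hzU))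
    exact ⟨kU, fun k hk => ⟨T^[nk k] z, ⟨z, hzU, rfl⟩, hkU k hk⟩⟩
  · rintro ⟨nk, hmono, hpos, htop⟩
    letI := TopologicalSpace.upgradeIsCompletelyMetrizable X
    by_cases hX : Nonempty X
    · obtain ⟨b, hbc, hbne, hbbasis⟩ := TopologicalSpace.exists_countable_basis X
      have hbnonempty : b.Nonempty := by
        obtain ⟨x⟩ := hX
        obtain ⟨v, hvb, -, -⟩ :=
          hbbasis.exists_subset_of_mem_open (mem_univ x) isOpen_univ
        exact ⟨v, hvb⟩
      obtain ⟨f, hf⟩ := hbc.exists_eq_range hbnonempty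
      have hfmem : ∀ i, f i ∈ b := fun i => hf ▸ mem_range_self i
      have hfo : ∀ i, IsOpen (f i) := fun i => hbbasis.isOpen (hfmem i)
      have hfne : ∀ i, (f i).Nonempty := fun i =>
        nonempty_iff_ne_empty.2 fun h => hbne (h ▸ hfmem i)
      obtain ⟨K, hK, y, hymem, hyconv⟩ := aux_exists T hT nk htop f hfo hfne
      refine ⟨fun j => nk (K j), hmono.comp hK, fun j => hpos _, range y, ?_, ?_⟩
      · refine hbbasis.dense_iff.2 fun o hob hone => ?_
        rw [hf] at hob
        obtain ⟨i, rfl⟩ := hob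
        exact ⟨y i, hymem i, mem_range_self i⟩
      · rintro z ⟨i, rfl⟩
        exact hyconv i
    · exact ⟨nk, hmono, hpos, univ, dense_univ, fun z _ => (hX ⟨z⟩).elim⟩
end

section
/- Let (X,T) be a Polish dynamical system, i.e. T is a continuous self-map of a separable completely metrizable topological space X. The following are equivalent: (i) T is quasi-rigid; (ii) T is topologically quasi-rigid; (iii) for every N ∈ ℕ the N-fold product map T_(N) : X^N → X^N is topologically recurrent; (iv) for every N ∈ ℕ the N-fold product map T_(N) is recurrent, i.e. the set of recurrent points of T_(N) is dense in X^N. -/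
open Filter Topology Set

lemma pi_iterate {X ι : Type*} (T : X → X) (n : ℕ) (x : ι → X) (j : ι) :
    (fun (x : ι → X) i => T (x i))^[n] x j = T^[n] (x j) := by
  induction n generalizing x with
  | zero => rfl
  | succ n ih =>
    rw [Function.iterate_succ_apply, Function.iterate_succ_apply]
    exact ih (fun i => T (x i))

lemma exists_strictMono_subseq {g : ℕ → ℕ} (h : ∀ n : ℕ, ∃ N, ∀ m ≥ N, g m ≠ n) :
    ∃ φ : ℕ → ℕ, StrictMono φ ∧ StrictMono (g ∘ φ) := by
  apply strictMono_subseq_of_tendsto_atTop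
  rw [Filter.tendsto_atTop]
  intro b
  have : ∀ᶠ m in atTop, ∀ n ∈ Finset.range b, g m ≠ n := by
    rw [Filter.eventually_all_finset]
    intro n _
    obtain ⟨N, hN⟩ := h n
    exact eventually_atTop.2 ⟨N, hN⟩
  filter_upwards [this] with m hm
  by_contra hc
  exact hm (g m) (Finset.mem_range.2 (lt_of_not_ge hc)) rfl

lemma exists_rigid_subseq {Z : Type*} [MetricSpace Z] {S : Z → Z} {x : Z} {g : ℕ → ℕ}
    (hg1 : ∀ m, 1 ≤ g m) (hconv : Tendsto (fun m => S^[g m] x) atTop (𝓝 x)) :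
    ∃ nk : ℕ → ℕ, StrictMono nk ∧ (∀ k, 1 ≤ nk k) ∧
      Tendsto (fun k => S^[nk k] x) atTop (𝓝 x) := by
  by_cases h : ∀ n : ℕ, ∃ N, ∀ m ≥ N, g m ≠ n
  · obtain ⟨φ, hφ, hgφ⟩ := exists_strictMono_subseq h
    exact ⟨g ∘ φ, hgφ, fun k => hg1 _, hconv.comp hφ.tendsto_atTop⟩
  · push_neg at h
    obtain ⟨n, hn⟩ := h
    have hfreq : ∃ᶠ m in atTop, g m = n := by
      rw [frequently_atTop]; intro a; obtain ⟨m, hm, he⟩ := hn a; exact ⟨m, hm, he⟩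
    obtain ⟨φ, hφ, hgφ⟩ := Filter.extraction_of_frequently_atTop hfreq
    have hfix : S^[n] x = x := by
      have h1 : Tendsto (fun k => S^[g (φ k)] x) atTop (𝓝 x) := hconv.comp hφ.tendsto_atTop
      have h2 : (fun k => S^[g (φ k)] x) = fun _ => S^[n] x := by
        funext k; rw [hgφ k]
      rw [h2] at h1
      exact (tendsto_nhds_unique h1 tendsto_const_nhds).symm
    have hn1 : 1 ≤ n := hgφ 0 ▸ hg1 (φ 0)
    refine ⟨fun k => n * (k + 1), ?_, fun k => Nat.mul_pos (by omega) (by omega), ?_⟩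
    · intro a b hab
      exact (mul_lt_mul_iff_right₀ (by omega : 0 < n)).2 (by omega)
    · have : ∀ k, S^[n * (k + 1)] x = x := by
        intro k
        rw [Function.iterate_mul]
        exact Function.iterate_fixed hfix (k + 1)
      simp only [this]
      exact tendsto_const_nhds

/-- A point `x` is recurrent for `T` if `x` belongs to the closure of `{T^n x : n ≥ 1}`. -/
def RecPt {X : Type*} [TopologicalSpace X] (T : X → X) (x : X) : Prop :=
  x ∈ closure (Set.range fun n : ℕ => T^[n + 1] x)

/-- `T` is recurrent: the set of recurrent points is dense. -/
def RecurrentMap {X : Type*} [TopologicalSpace X] (T : X → X) : Prop :=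
  Dense {x : X | RecPt T x}

lemma imp14 {X : Type*} [TopologicalSpace X] {T : X → X} (h : QuasiRigid T) :
    ∀ N : ℕ, 1 ≤ N → RecurrentMap (prodMap T N) := by
  obtain ⟨nk, hmono, h1, Y, hY, hconv⟩ := h
  intro N _
  have hsub : (univ : Set (Fin N)).pi (fun _ => Y) ⊆ {x | RecPt (prodMap T N) x} := by
    intro x hx
    have hten : Tendsto (fun k => (prodMap T N)^[nk k] x) atTop (𝓝 x) := by
      rw [tendsto_pi_nhds]
      intro j
      have : ∀ k, (prodMap T N)^[nk k] x j = T^[nk k] (x j) := fun k => pi_iterate T _ x j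
      simp only [this]
      exact hconv (x j) (hx j (mem_univ j))
    refine mem_closure_of_tendsto hten ?_
    filter_upwards with k
    refine ⟨nk k - 1, ?_⟩
    show (prodMap T N)^[nk k - 1 + 1] x = _
    have h2 : nk k - 1 + 1 = nk k := by have := h1 k; omega
    rw [h2]
  have hdense : Dense ((univ : Set (Fin N)).pi (fun _ => Y)) := dense_pi univ (fun _ _ => hY)
  exact hdense.mono hsub

lemma imp43 {X : Type*} [TopologicalSpace X] {T : X → X}
    (h : ∀ N : ℕ, 1 ≤ N → RecurrentMap (prodMap T N)) :
    ∀ N : ℕ, 1 ≤ N → TopologicallyRecurrent (prodMap T N) := by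
  intro N hN U hU hUne
  obtain ⟨x, hx, hxU⟩ := (h N hN).exists_mem_open hU hUne
  have : (U ∩ range fun n : ℕ => (prodMap T N)^[n + 1] x).Nonempty :=
    mem_closure_iff.1 hx U hU hxU
  obtain ⟨y, hyU, n, rfl⟩ := this
  exact ⟨n + 1, by omega, ⟨(prodMap T N)^[n+1] x, ⟨x, hxU, rfl⟩, hyU⟩⟩

lemma boxRec {X : Type*} [TopologicalSpace X] {T : X → X}
    (h3 : ∀ N : ℕ, 1 ≤ N → TopologicallyRecurrent (prodMap T N))
    {N : ℕ} (hN : 1 ≤ N) (V : Fin N → Set X) (hVo : ∀ i, IsOpen (V i))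
    (hVne : ∀ i, (V i).Nonempty) :
    ∃ n, 1 ≤ n ∧ ∃ x : Fin N → X, ∀ i, x i ∈ V i ∧ T^[n] (x i) ∈ V i := by
  have hUo : IsOpen ((univ : Set (Fin N)).pi V) :=
    isOpen_set_pi finite_univ (fun i _ => hVo i)
  have hUne : ((univ : Set (Fin N)).pi V).Nonempty :=
    ⟨fun i => (hVne i).choose, fun i _ => (hVne i).choose_spec⟩
  obtain ⟨n, hn1, y, ⟨x, hxU, rfl⟩, hyU⟩ := h3 N hN _ hUo hUne
  refine ⟨n, hn1, x, fun i => ⟨hxU i (mem_univ i), ?_⟩⟩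
  have : (prodMap T N)^[n] x i = T^[n] (x i) := pi_iterate T n x i
  rw [← this]
  exact hyU i (mem_univ i)

lemma boxRecLarge {X : Type*} [TopologicalSpace X] {T : X → X} (hT : Continuous T)
    (h3 : ∀ N : ℕ, 1 ≤ N → TopologicallyRecurrent (prodMap T N))
    {N : ℕ} (hN : 1 ≤ N) (V : Fin N → Set X) (hVo : ∀ i, IsOpen (V i))
    (hVne : ∀ i, (V i).Nonempty) (m : ℕ) :
    ∃ n, m < n ∧ ∃ x : Fin N → X, ∀ i, x i ∈ V i ∧ T^[n] (x i) ∈ V i := by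
  induction m with
  | zero =>
    obtain ⟨n, hn1, hx⟩ := boxRec h3 hN V hVo hVne
    exact ⟨n, hn1, hx⟩
  | succ m ih =>
    obtain ⟨n, hmn, x, hx⟩ := ih
    set V' : Fin N → Set X := fun i => V i ∩ T^[n] ⁻¹' (V i) with hV'
    have hV'o : ∀ i, IsOpen (V' i) := fun i =>
      (hVo i).inter ((hVo i).preimage (hT.iterate n))
    have hV'ne : ∀ i, (V' i).Nonempty := fun i => ⟨x i, (hx i).1, (hx i).2⟩
    obtain ⟨p, hp1, z, hz⟩ := boxRec h3 hN V' hV'o hV'ne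
    refine ⟨n + p, by omega, z, fun i => ⟨((hz i).1).1, ?_⟩⟩
    rw [Function.iterate_add_apply]
    exact ((hz i).2).2

lemma imp32 {X : Type*} [TopologicalSpace X] [SecondCountableTopology X] {T : X → X}
    (hT : Continuous T)
    (h3 : ∀ N : ℕ, 1 ≤ N → TopologicallyRecurrent (prodMap T N)) :
    TopologicallyQuasiRigid T := by
  by_cases hX : Nonempty X
  swap
  · refine ⟨fun k => k + 1, fun a b hab => Nat.succ_lt_succ hab, fun k => Nat.succ_le_succ (Nat.zero_le k), ?_⟩
    intro U _ hUne
    exact absurd ⟨hUne.choose⟩ hX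
  -- countable basis of nonempty sets
  obtain ⟨b, hbc, hbnotriv, hb⟩ := TopologicalSpace.exists_countable_basis X
  set bs := {B ∈ b | B.Nonempty} with hbs
  have hbsne : bs.Nonempty := by
    obtain ⟨x⟩ := hX
    obtain ⟨B, hBb, hxB, _⟩ := hb.exists_subset_of_mem_open (mem_univ x) isOpen_univ
    exact ⟨B, hBb, ⟨x, hxB⟩⟩
  obtain ⟨e, he⟩ := (hbc.mono (sep_subset _ _)).exists_eq_range hbsne
  have hebs : ∀ j, e j ∈ bs := fun j => by
    have : e j ∈ range e := mem_range_self j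
    rwa [← he] at this
  have heo : ∀ j, IsOpen (e j) := fun j => hb.isOpen (hebs j).1
  have hene : ∀ j, (e j).Nonempty := fun j => (hebs j).2
  -- recursive construction
  have key : ∀ k m : ℕ, ∃ n, m < n ∧ ∀ j ≤ k, ∃ x ∈ e j, T^[n] x ∈ e j := by
    intro k m
    obtain ⟨n, hmn, x, hx⟩ := boxRecLarge hT h3 (by omega : 1 ≤ k + 1)
      (fun i : Fin (k+1) => e i) (fun i => heo i) (fun i => hene i) m
    refine ⟨n, hmn, fun j hj => ?_⟩
    have := hx ⟨j, by omega⟩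
    exact ⟨x ⟨j, by omega⟩, this.1, this.2⟩
  set nfun : ℕ → ℕ := fun k => Nat.rec ((key 0 0).choose) (fun k ih => (key (k+1) ih).choose) k
    with hnfun
  have hspec : ∀ k, (k = 0 → 0 < nfun k) ∧ (∀ j ≤ k, ∃ x ∈ e j, T^[nfun k] x ∈ e j) ∧
      (∀ k', k = k' + 1 → nfun k' < nfun k) := by
    intro k
    cases k with
    | zero =>
      have h := (key 0 0).choose_spec
      exact ⟨fun _ => h.1, h.2, fun k' hk' => by omega⟩
    | succ k =>
      have h := (key (k+1) (nfun k)).choose_spec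
      exact ⟨fun h0 => by omega, h.2, fun k' hk' => by
        have : k' = k := by omega
        subst this; exact h.1⟩
  have hmono : StrictMono nfun :=
    strictMono_nat_of_lt_succ (fun k => (hspec (k+1)).2.2 k rfl)
  have h1 : ∀ k, 1 ≤ nfun k := by
    intro k
    have h0 : 0 < nfun 0 := (hspec 0).1 rfl
    have := hmono.monotone (Nat.zero_le k)
    omega
  refine ⟨nfun, hmono, h1, ?_⟩
  intro U hUo hUne
  obtain ⟨x, hxU⟩ := hUne
  obtain ⟨B, hBb, hxB, hBU⟩ := hb.exists_subset_of_mem_open hxU hUo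
  have hBbs : B ∈ bs := ⟨hBb, ⟨x, hxB⟩⟩
  have hBr : B ∈ range e := by rw [← he]; exact hBbs
  obtain ⟨j, hj⟩ := hBr
  refine ⟨j, fun k hk => ?_⟩
  obtain ⟨z, hz1, hz2⟩ := (hspec k).2.1 j hk
  rw [hj] at hz1 hz2
  exact ⟨T^[nfun k] z, ⟨z, hBU hz1, rfl⟩, hBU hz2⟩

lemma imp21 {X : Type*} [TopologicalSpace X] [PolishSpace X] {T : X → X} (hT : Continuous T)
    (h2 : TopologicallyQuasiRigid T) : QuasiRigid T := by
  by_cases hX : Nonempty X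
  swap
  · refine ⟨fun k => k + 1, fun a b hab => Nat.succ_lt_succ hab,
      fun k => Nat.succ_le_succ (Nat.zero_le k), ∅, ?_, fun y hy => absurd hy (notMem_empty y)⟩
    rw [dense_iff_inter_open]
    intro U _ hUne
    exact absurd ⟨hUne.choose⟩ hX
  obtain ⟨nk, hnkmono, hnk1, hnk⟩ := h2
  obtain ⟨b, hbc, hbnotriv, hb⟩ := TopologicalSpace.exists_countable_basis X
  have hbsne : {B ∈ b | B.Nonempty}.Nonempty := by
    obtain ⟨p⟩ := hX
    obtain ⟨B, hBb, hxB, _⟩ := hb.exists_subset_of_mem_open (mem_univ p) isOpen_univ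
    exact ⟨B, hBb, ⟨p, hxB⟩⟩
  obtain ⟨e, he⟩ := (hbc.mono (sep_subset _ _)).exists_eq_range hbsne
  have hebs : ∀ j, e j ∈ {B ∈ b | B.Nonempty} := fun j => by
    have : e j ∈ range e := mem_range_self j
    rwa [← he] at this
  have heo : ∀ j, IsOpen (e j) := fun j => hb.isOpen (hebs j).1
  have hene : ∀ j, (e j).Nonempty := fun j => (hebs j).2
  letI : TopologicalSpace.UpgradedIsCompletelyMetrizableSpace (ℕ → X) := TopologicalSpace.upgradeIsCompletelyMetrizable (ℕ → X)
  set S : (ℕ → X) → (ℕ → X) := fun x j => T (x j) with hS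
  have hSit : ∀ (n : ℕ) (x : ℕ → X) (j : ℕ), S^[n] x j = T^[n] (x j) :=
    fun n x j => pi_iterate T n x j
  have hScont : Continuous S := continuous_pi (fun j => hT.comp (continuous_apply j))
  -- Step 1: near-recurrence of S on open sets
  have step1 : ∀ W : Set (ℕ → X), IsOpen W → W.Nonempty →
      ∃ n, 1 ≤ n ∧ ∃ z ∈ W, S^[n] z ∈ W := by
    intro W hWo hWne
    obtain ⟨f, hfW⟩ := hWne
    obtain ⟨I, u, hu, hsub⟩ := isOpen_pi_iff.1 hWo f hfW
    have hk : ∀ a : ℕ, ∃ ka, ∀ k ≥ ka, a ∈ I → ((T^[nk k] '' u a) ∩ u a).Nonempty := by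
      intro a
      by_cases ha : a ∈ I
      · obtain ⟨ka, hka⟩ := hnk (u a) (hu a ha).1 ⟨f a, (hu a ha).2⟩
        exact ⟨ka, fun k hk _ => hka k hk⟩
      · exact ⟨0, fun k _ h => absurd h ha⟩
    choose ka hka using hk
    set k := I.sup ka with hkdef
    have hz : ∀ a : ℕ, ∃ x : X, a ∈ I → (x ∈ u a ∧ T^[nk k] x ∈ u a) := by
      intro a
      by_cases ha : a ∈ I
      · obtain ⟨y, ⟨x, hxu, rfl⟩, hyu⟩ := hka a k (Finset.le_sup ha) ha
        exact ⟨x, fun _ => ⟨hxu, hyu⟩⟩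
      · exact ⟨Classical.arbitrary X, fun h => absurd h ha⟩
    choose z hz using hz
    refine ⟨nk k, hnk1 k, z, hsub (fun a ha => (hz a ha).1), hsub ?_⟩
    intro a ha
    show S^[nk k] z a ∈ u a
    rw [hSit]
    exact (hz a ha).2
  -- Step 2: open dense sets G m
  set G : ℕ → Set (ℕ → X) :=
    fun m => {x | ∃ n, 1 ≤ n ∧ dist (S^[n] x) x < 1 / ((m : ℝ) + 1)} with hG
  have hGo : ∀ m, IsOpen (G m) := by
    intro m
    have hGeq : G m = ⋃ n, ⋃ (_ : 1 ≤ n), {x | dist (S^[n] x) x < 1 / ((m : ℝ) + 1)} := by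
      ext x
      simp [hG, mem_iUnion]
    rw [hGeq]
    exact isOpen_iUnion fun n => isOpen_iUnion fun _ =>
      isOpen_lt ((hScont.iterate n).dist continuous_id) continuous_const
  have hGd : ∀ m, Dense (G m) := by
    intro m
    rw [dense_iff_inter_open]
    intro W hWo hWne
    have hpos : (0 : ℝ) < 1 / ((m : ℝ) + 1) := by positivity
    obtain ⟨f, hf⟩ := hWne
    have hW'o : IsOpen (W ∩ Metric.ball f (1 / ((m : ℝ) + 1) / 3)) :=
      hWo.inter Metric.isOpen_ball
    have hW'ne : (W ∩ Metric.ball f (1 / ((m : ℝ) + 1) / 3)).Nonempty :=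
      ⟨f, hf, Metric.mem_ball_self (by positivity)⟩
    obtain ⟨n, hn1, z, hzW', hSzW'⟩ := step1 _ hW'o hW'ne
    refine ⟨z, hzW'.1, n, hn1, ?_⟩
    have h1 : dist (S^[n] z) f < 1 / ((m : ℝ) + 1) / 3 := hSzW'.2
    have h2 : dist z f < 1 / ((m : ℝ) + 1) / 3 := hzW'.2
    calc dist (S^[n] z) z ≤ dist (S^[n] z) f + dist z f := dist_triangle_right _ _ _
      _ < 1 / ((m : ℝ) + 1) := by linarith
  -- Step 3: open dense sets D j
  set D : ℕ → Set (ℕ → X) := fun j => ⋃ i, (fun x : ℕ → X => x i) ⁻¹' (e j) with hD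
  have hDo : ∀ j, IsOpen (D j) :=
    fun j => isOpen_iUnion fun i => (heo j).preimage (continuous_apply i)
  have hDd : ∀ j, Dense (D j) := by
    intro j
    rw [dense_iff_inter_open]
    intro W hWo hWne
    obtain ⟨f, hfW⟩ := hWne
    obtain ⟨I, u, hu, hsub⟩ := isOpen_pi_iff.1 hWo f hfW
    obtain ⟨i₀, hi₀⟩ := Infinite.exists_notMem_finset I
    obtain ⟨c, hc⟩ := hene j
    refine ⟨Function.update f i₀ c, hsub ?_, ?_⟩
    · intro a ha
      rw [Function.update_of_ne (by rintro rfl; exact hi₀ ha)]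
      exact (hu a ha).2
    · exact mem_iUnion.2 ⟨i₀, by simpa using hc⟩
  -- Step 4: Baire category
  have hdense : Dense (⋂ p : ℕ ⊕ ℕ, Sum.elim G D p) := by
    apply dense_iInter_of_isOpen
    · rintro (m | j)
      · exact hGo m
      · exact hDo j
    · rintro (m | j)
      · exact hGd m
      · exact hDd j
  obtain ⟨x, hx⟩ := hdense.nonempty
  have hxG : ∀ m : ℕ, ∃ n, 1 ≤ n ∧ dist (S^[n] x) x < 1 / ((m : ℝ) + 1) :=
    fun m => mem_iInter.1 hx (Sum.inl m)
  have hxD : ∀ j, ∃ i, x i ∈ e j :=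
    fun j => mem_iUnion.1 (mem_iInter.1 hx (Sum.inr j))
  -- Step 5: convergence along some sequence
  choose g hg1 hgd using hxG
  have hconv : Tendsto (fun m => S^[g m] x) atTop (𝓝 x) := by
    rw [tendsto_iff_dist_tendsto_zero]
    exact squeeze_zero (fun m => dist_nonneg) (fun m => (hgd m).le)
      tendsto_one_div_add_atTop_nhds_zero_nat
  -- Step 6: extract a strictly monotone sequence
  obtain ⟨nk', hmono', h1', htend⟩ := exists_rigid_subseq hg1 hconv
  -- Step 7: conclude
  refine ⟨nk', hmono', h1', Set.range x, ?_, ?_⟩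
  · rw [dense_iff_inter_open]
    intro U hUo hUne
    obtain ⟨p, hpU⟩ := hUne
    obtain ⟨B, hBb, hpB, hBU⟩ := hb.exists_subset_of_mem_open hpU hUo
    have hBr : B ∈ range e := by
      rw [← he]; exact ⟨hBb, ⟨p, hpB⟩⟩
    obtain ⟨j, rfl⟩ := hBr
    obtain ⟨i, hi⟩ := hxD j
    exact ⟨x i, hBU hi, mem_range_self i⟩
  · rintro y ⟨i, rfl⟩
    have hcoord : Tendsto (fun k => S^[nk' k] x i) atTop (𝓝 (x i)) :=
      ((continuous_apply i).tendsto x).comp htend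
    have heq : (fun k => S^[nk' k] x i) = fun k => T^[nk' k] (x i) :=
      funext fun k => hSit (nk' k) x i
    rwa [heq] at hcoord

/-- For a Polish dynamical system the following are equivalent: quasi-rigidity,
topological quasi-rigidity, topological recurrence of every `T_(N)`, and recurrence
of every `T_(N)`. -/
theorem stmt2 {X : Type*} [TopologicalSpace X] [PolishSpace X]
    (T : X → X) (hT : Continuous T) :
    List.TFAE
      [QuasiRigid T,
       TopologicallyQuasiRigid T,
       ∀ N : ℕ, 1 ≤ N → TopologicallyRecurrent (prodMap T N),
       ∀ N : ℕ, 1 ≤ N → RecurrentMap (prodMap T N)] := by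
  tfae_have 1 → 4 := fun h => imp14 h
  tfae_have 4 → 3 := fun h => imp43 h
  tfae_have 3 → 2 := fun h => imp32 hT h
  tfae_have 2 → 1 := fun h => imp21 hT h
  tfae_finish
end

section
/- Let T : X → X be a quasi-rigid continuous linear operator on a separable infinite-dimensional F-space X. Then Rec(T) is dense lineable: there exists a dense infinite-dimensional vector subspace Z of X with Z ⊆ Rec(T). -/
/-!
The points `z` with `T^[n_k] z → z` form a linear subspace, because `T^[n_k]` is linear and
continuous. This subspace contains the dense set given by quasi-rigidity, so it is dense, and a
dense subspace of an infinite-dimensional Hausdorff space cannot be finite-dimensional, since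
finite-dimensional subspaces are closed. Each of its points is recurrent because `n_k ≥ 1`.
-/

open Filter Topology Set

namespace LinearMap

variable {R M : Type*} [Semiring R] [AddCommMonoid M] [Module R M] [TopologicalSpace M]
  [ContinuousAdd M] [ContinuousConstSMul R M]

def rigidSubmodule (f : M →ₗ[R] M) (n : ℕ → ℕ) : Submodule R M where
  carrier := {z | Tendsto (fun k => f^[n k] z) atTop (𝓝 z)}
  zero_mem' := by
    simpa only [Set.mem_ofPred_eq, iterate_map_zero] using tendsto_const_nhds
  add_mem' {x y} hx hy := by
    simpa only [Set.mem_ofPred_eq, iterate_map_add] using hx.add hy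
  smul_mem' c x hx := by
    simpa only [Set.mem_ofPred_eq, ← Module.End.pow_apply, map_smul] using hx.const_smul c

theorem mem_rigidSubmodule {f : M →ₗ[R] M} {n : ℕ → ℕ} {z : M} :
    z ∈ f.rigidSubmodule n ↔ Tendsto (fun k => f^[n k] z) atTop (𝓝 z) :=
  Iff.rfl

end LinearMap

theorem RecPt.of_tendsto_iterate {X : Type*} [TopologicalSpace X] {T : X → X} {n : ℕ → ℕ}
    (hn : ∀ k, 1 ≤ n k) {x : X} (hx : Tendsto (fun k => T^[n k] x) atTop (𝓝 x)) :
    RecPt T x := by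
  refine mem_closure_of_tendsto hx (Eventually.of_forall fun k => ?_)
  exact ⟨n k - 1, by simp only [Nat.sub_add_cancel (hn k)]⟩

theorem Submodule.not_finiteDimensional_of_dense {𝕜 E : Type*} [NontriviallyNormedField 𝕜]
    [CompleteSpace 𝕜] [AddCommGroup E] [TopologicalSpace E] [IsTopologicalAddGroup E]
    [Module 𝕜 E] [ContinuousSMul 𝕜 E] [T2Space E] (hE : ¬ FiniteDimensional 𝕜 E)
    {Z : Submodule 𝕜 E} (hZ : Dense (Z : Set E)) : ¬ FiniteDimensional 𝕜 Z := by
  intro hZfin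
  have hZtop : Z = ⊤ := by
    rw [← Z.closed_of_finiteDimensional.submodule_topologicalClosure_eq]
    exact Submodule.dense_iff_topologicalClosure_eq_top.mp hZ
  subst hZtop
  exact hE (Module.Finite.equiv (Submodule.topEquiv (R := 𝕜) (M := E)))

/-- If `T` is a quasi-rigid continuous linear operator on a separable
infinite-dimensional F-space `X` (over `𝕜 = ℝ` or `ℂ`), then `Rec(T)` is dense
lineable: it contains a dense infinite-dimensional vector subspace. -/
theorem stmt3 {𝕜 : Type*} [RCLike 𝕜] {X : Type*} [AddCommGroup X] [Module 𝕜 X]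
    [TopologicalSpace X] [IsTopologicalAddGroup X] [ContinuousSMul 𝕜 X] [PolishSpace X]
    (hX : ¬ FiniteDimensional 𝕜 X)
    (T : X →L[𝕜] X) (hqr : QuasiRigid ⇑T) :
    ∃ Z : Submodule 𝕜 X, Dense (Z : Set X) ∧ ¬ FiniteDimensional 𝕜 Z ∧
      ∀ x ∈ Z, RecPt (⇑T) x := by
  obtain ⟨n, -, hn, Y, hYdense, hY⟩ := hqr
  set Z := (T : X →ₗ[𝕜] X).rigidSubmodule n
  have hZdense : Dense (Z : Set X) :=
    hYdense.mono fun y hy => LinearMap.mem_rigidSubmodule.mpr (hY y hy)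
  exact ⟨Z, hZdense, Submodule.not_finiteDimensional_of_dense hX hZdense,
    fun x hx => RecPt.of_tendsto_iterate hn (LinearMap.mem_rigidSubmodule.mp hx)⟩
end

section
/- Let T be a topologically recurrent continuous linear operator on a complex Hausdorff topological vector space X. Then for every λ ∈ ℂ with |λ| ≠ 1, the operator T − λ·I has dense range in X. Consequently, for every complex polynomial p having no root of modulus 1, the operator p(T) has dense range in X. -/
open Filter Topology Set

/-!
Let `M` be the closure of the range of `T - λ`. Since `T u - λ u ∈ M`, also `Tⁿ u - λⁿ u ∈ M`
for all `n`, i.e. `T` acts on `X / M` as multiplication by `λ`. Say `|λ| < 1` (otherwise replace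
`λ` by `λ⁻¹` and exchange the roles of `u` and `Tⁿ u`). If `x₀ ∉ M`, then, because
`(1 - a)⁻¹ • (u - a • u')` depends continuously on `(a, u, u')` and the disc `|a| ≤ |λ|` is compact,
some neighbourhood `U` of `x₀` satisfies `u - a • u' ∉ M` for all `u, u' ∈ U` and `|a| ≤ |λ|`.
Recurrence gives `u, Tⁿ u ∈ U` with `n ≥ 1`, contradicting `Tⁿ u - λⁿ u ∈ M`.
The statement for polynomials follows by factoring `p` into linear factors.
-/

open Polynomial

theorem ContinuousLinearMap.denseRange_aeval_mul {R X : Type*} [CommRing R] [AddCommGroup X]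
    [Module R X] [TopologicalSpace X] [IsTopologicalAddGroup X] [ContinuousConstSMul R X]
    (T : X →L[R] X) {p q : Polynomial R} (hp : DenseRange (aeval T p))
    (hq : DenseRange (aeval T q)) :
    DenseRange (aeval T (p * q)) := by
  rw [map_mul]
  exact hp.comp hq (aeval T p).continuous

theorem Submodule.iterate_sub_pow_smul_mem {R X : Type*} [CommRing R] [AddCommGroup X] [Module R X]
    {M : Submodule R X} {T : X →ₗ[R] X} {lam : R} (hT : ∀ x, T x - lam • x ∈ M) (n : ℕ) (x : X) :
    T^[n] x - lam ^ n • x ∈ M := by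
  induction n with
  | zero => simp
  | succ n ih =>
    have key := M.add_mem (hT (T^[n] x)) (M.smul_mem lam ih)
    rw [Function.iterate_succ_apply', pow_succ', mul_smul]
    convert key using 1
    module

section

variable {𝕜 X : Type*} [NontriviallyNormedField 𝕜] [AddCommGroup X] [Module 𝕜 X]
  [TopologicalSpace X]

theorem exists_isOpen_sub_smul_notMem [ProperSpace 𝕜] [ContinuousSub X] [ContinuousSMul 𝕜 X]
    {M : Submodule 𝕜 X} (hM : IsClosed (M : Set X)) {x₀ : X} (hx₀ : x₀ ∉ M) {r : ℝ}
    (hr : r < 1) :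
    ∃ U : Set X, IsOpen U ∧ x₀ ∈ U ∧ ∀ u ∈ U, ∀ u' ∈ U, ∀ a : 𝕜, ‖a‖ ≤ r → u - a • u' ∉ M := by
  have hlocal : ∀ a ∈ Metric.closedBall (0 : 𝕜) r,
      ∀ᶠ z : (X × X) × 𝕜 in 𝓝 ((x₀, x₀), a), z.1.1 - z.2 • z.1.2 ∉ M := by
    intro a ha
    have ha1 : 1 - a ≠ 0 := sub_ne_zero.2 fun h => by
      simpa [← h] using (mem_closedBall_zero_iff.1 ha).trans_lt hr
    have hcont : ContinuousAt (fun z : (X × X) × 𝕜 => (1 - z.2)⁻¹ • (z.1.1 - z.2 • z.1.2))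
        ((x₀, x₀), a) := by
      fun_prop (disch := exact ha1)
    have hvalue : (1 - a)⁻¹ • (x₀ - a • x₀) = x₀ := by
      rw [show x₀ - a • x₀ = (1 - a) • x₀ by rw [sub_smul, one_smul], inv_smul_smul₀ ha1]
    filter_upwards [hcont.eventually (hM.isOpen_compl.mem_nhds (by dsimp only; rwa [hvalue]))]
      with z hz hmem using hz (M.smul_mem _ hmem)
  have hunif := (isCompact_closedBall (0 : 𝕜) r).eventually_forall_of_forall_eventually
    (P := fun (p : X × X) (a : 𝕜) => p.1 - a • p.2 ∉ M) hlocal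
  rw [nhds_prod_eq] at hunif
  obtain ⟨t, ht, hUt⟩ := eventually_prod_self_iff'.1 hunif
  obtain ⟨U, hUt', hUo, hx₀U⟩ := mem_nhds_iff.1 ht
  exact ⟨U, hUo, hx₀U, fun u hu u' hu' a ha =>
    hUt u (hUt' hu) u' (hUt' hu') a (mem_closedBall_zero_iff.2 ha)⟩

theorem TopologicallyRecurrent.denseRange_sub_smul [ProperSpace 𝕜] [IsTopologicalAddGroup X]
    [ContinuousSMul 𝕜 X] {T : X →L[𝕜] X} (hT : TopologicallyRecurrent T) {lam : 𝕜}
    (hlam : ‖lam‖ ≠ 1) :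
    DenseRange fun x : X => T x - lam • x := by
  set M := (LinearMap.range ((T : X →ₗ[𝕜] X) - lam • LinearMap.id)).topologicalClosure
  have hM : (M : Set X) = closure (range fun x : X => T x - lam • x) := by
    rw [Submodule.topologicalClosure_coe, LinearMap.coe_range]
    rfl
  have hMc : IsClosed (M : Set X) := Submodule.isClosed_topologicalClosure _
  rw [DenseRange, dense_iff_closure_eq, ← hM, eq_univ_iff_forall]
  by_contra! ⟨x₀, hx₀⟩
  have hiter : ∀ n u, T^[n] u - lam ^ n • u ∈ M :=
    Submodule.iterate_sub_pow_smul_mem (T := (T : X →ₗ[𝕜] X))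
      fun x => Submodule.le_topologicalClosure _ (LinearMap.mem_range_self _ x)
  rcases hlam.lt_or_gt with hlt | hgt
  · obtain ⟨U, hUo, hx₀U, hU⟩ := exists_isOpen_sub_smul_notMem hMc hx₀ hlt
    obtain ⟨n, hn, _, ⟨u, hu, rfl⟩, hTu⟩ := hT U hUo ⟨x₀, hx₀U⟩
    refine hU _ hTu u hu (lam ^ n) ?_ (hiter n u)
    rw [norm_pow]
    exact pow_le_of_le_one (norm_nonneg _) hlt.le (by omega)
  · have hlam0 : lam ≠ 0 := norm_pos_iff.1 (one_pos.trans hgt)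
    obtain ⟨U, hUo, hx₀U, hU⟩ :=
      exists_isOpen_sub_smul_notMem hMc hx₀ (inv_lt_one_of_one_lt₀ hgt)
    obtain ⟨n, hn, _, ⟨u, hu, rfl⟩, hTu⟩ := hT U hUo ⟨x₀, hx₀U⟩
    refine hU u hu _ hTu (lam⁻¹ ^ n) ?_ ?_
    · rw [norm_pow, norm_inv]
      exact pow_le_of_le_one (by positivity) (inv_le_one_of_one_le₀ hgt.le) (by omega)
    · convert M.smul_mem (-lam⁻¹ ^ n) (hiter n u) using 1
      rw [smul_sub, smul_smul, neg_mul, ← mul_pow, inv_mul_cancel₀ hlam0, one_pow, neg_smul,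
        neg_smul, one_smul]
      abel

theorem TopologicallyRecurrent.denseRange_aeval [IsAlgClosed 𝕜] [ProperSpace 𝕜]
    [IsTopologicalAddGroup X] [ContinuousSMul 𝕜 X] {T : X →L[𝕜] X} (hT : TopologicallyRecurrent T)
    {p : Polynomial 𝕜} (hp : ∀ z : 𝕜, ‖z‖ = 1 → ¬ p.IsRoot z) :
    DenseRange (aeval T p) := by
  have hp0 : p ≠ 0 := by
    rintro rfl
    exact hp 1 norm_one (by simp)
  rw [(IsAlgClosed.splits p).eq_prod_roots]
  refine ContinuousLinearMap.denseRange_aeval_mul T ?_ ?_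
  · have hc : p.leadingCoeff ≠ 0 := leadingCoeff_ne_zero.2 hp0
    have hsurj : Function.Surjective (algebraMap 𝕜 (X →L[𝕜] X) p.leadingCoeff) := fun y =>
      ⟨p.leadingCoeff⁻¹ • y, by simp [Algebra.algebraMap_eq_smul_one, hc]⟩
    rw [aeval_C]
    exact hsurj.denseRange
  · refine Multiset.prod_induction (fun q => DenseRange (aeval T q)) _
      (fun _ _ => ContinuousLinearMap.denseRange_aeval_mul T) (by simpa using denseRange_id) ?_
    simp only [Multiset.mem_map]
    rintro _ ⟨a, ha, rfl⟩
    convert hT.denseRange_sub_smul fun h => hp a h (isRoot_of_mem_roots ha) using 1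
    ext
    simp

end

theorem stmt6_general {X : Type*} [AddCommGroup X] [Module ℂ X] [TopologicalSpace X]
    [IsTopologicalAddGroup X] [ContinuousSMul ℂ X]
    (T : X →L[ℂ] X) (hrec : TopologicallyRecurrent ⇑T) :
    (∀ lam : ℂ, ‖lam‖ ≠ 1 → DenseRange fun x : X => T x - lam • x) ∧
    (∀ p : Polynomial ℂ, (∀ z : ℂ, ‖z‖ = 1 → ¬ p.IsRoot z) →
      DenseRange ⇑(Polynomial.aeval (R := ℂ) T p)) := by
  exact ⟨fun lam hlam => hrec.denseRange_sub_smul hlam, fun p hp => hrec.denseRange_aeval hp⟩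

/-- For a topologically recurrent continuous linear operator `T` on a complex Hausdorff
topological vector space, `T - λ` has dense range for every `λ` with `|λ| ≠ 1`, and
consequently `p(T)` has dense range for every complex polynomial `p` with no unimodular
root. -/
theorem stmt6 {X : Type*} [AddCommGroup X] [Module ℂ X] [TopologicalSpace X]
    [IsTopologicalAddGroup X] [ContinuousSMul ℂ X] [T2Space X]
    (T : X →L[ℂ] X) (hrec : TopologicallyRecurrent ⇑T) :
    (∀ lam : ℂ, ‖lam‖ ≠ 1 → DenseRange fun x : X => T x - lam • x) ∧
    (∀ p : Polynomial ℂ, (∀ z : ℂ, ‖z‖ = 1 → ¬ p.IsRoot z) →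
      DenseRange ⇑(Polynomial.aeval (R := ℂ) T p)) :=
  stmt6_general T hrec
end

section
/- Let (X,T) be a linear dynamical system. If T is recurrent and cyclic, then the set of cyclic vectors for T is a dense Gδ subset of X; in particular, T is quasi-rigid. -/
open Filter Topology Set

/-- `x` is a cyclic vector for `T`: the span of the orbit `{T^n x : n ∈ ℕ₀}` is dense. -/
def CyclicVector {𝕜 : Type*} [RCLike 𝕜] {X : Type*} [AddCommGroup X] [Module 𝕜 X]
    [TopologicalSpace X] (T : X →L[𝕜] X) (x : X) : Prop :=
  Dense (Submodule.span 𝕜 (Set.range fun n : ℕ => (⇑T)^[n] x) : Set X)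

/-!
The cyclic vectors are the `x` for which `{p(T) x}` meets every member of a countable basis, a
Gδ condition. For density, `q(T) x₀` is cyclic along with `x₀` as soon as `q(T)` has dense range,
and for `p ≠ 0` this holds for the dilations `q = p(tX)`, `t ≠ 1` real close to `1`. Indeed `p(tX)`
factors into linear and real quadratic factors none of which has a root on the unit circle, and
for such a factor `f` the remainders of `X^n` modulo `f` (roots inside the disc) or the `R_n` with
`X^n R_n ≡ 1` (roots outside) tend to `0`; along the return times `T^{n_k} r → r` of a recurrent
vector `r` this exhibits `r` as a limit of vectors in the range of `f(T)`. For quadratic factors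
the decay of the remainders is a Lyapunov estimate for the Lucas sequence of `f`. Finally, by
Baire some vector `x` is both cyclic and recurrent, and the return times of `x` serve the whole
dense set `{p(T) x}`.
-/

open Polynomial

section Recurrence

variable {α : Type*} [TopologicalSpace α] {f : α → α} {r : α}

theorem RecPt.mapClusterPt [T1Space α] (hr : RecPt f r) :
    MapClusterPt r atTop (fun n => f^[n + 1] r) := by
  rw [mapClusterPt_iff_frequently]
  intro s hs
  by_cases hper : ∃ m, f^[m + 1] r = r
  · obtain ⟨m, hm⟩ := hper
    refine frequently_atTop.2 fun N => ⟨m + (m + 1) * N, by nlinarith, ?_⟩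
    have hperiod : (m + (m + 1) * N) + 1 = (m + 1) * (N + 1) := by ring
    rw [hperiod, Function.iterate_mul, Function.IsFixedPt.iterate hm]
    exact mem_of_mem_nhds hs
  · simp only [not_exists] at hper
    rw [frequently_atTop]
    by_contra! hN
    obtain ⟨N, hN⟩ := hN
    have hfin : r ∉ (fun n => f^[n + 1] r) '' Iio N := by
      rintro ⟨n, -, hn⟩
      exact hper n hn
    have hs' : s \ (fun n => f^[n + 1] r) '' Iio N ∈ 𝓝 r :=
      sdiff_mem hs (((finite_Iio N).image _).isClosed.compl_mem_nhds hfin)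
    obtain ⟨_, ⟨hy, hyN⟩, n, rfl⟩ := mem_closure_iff_nhds.1 hr _ hs'
    rcases lt_or_ge n N with hn | hn
    · exact hyN ⟨n, hn, rfl⟩
    · exact hN n hn hy

theorem RecPt.exists_strictMono_tendsto [T1Space α] [FirstCountableTopology α]
    (hr : RecPt f r) :
    ∃ n : ℕ → ℕ, StrictMono n ∧ (∀ k, 1 ≤ n k) ∧ Tendsto (fun k => f^[n k] r) atTop (𝓝 r) := by
  obtain ⟨ψ, hψ, hlim⟩ := hr.mapClusterPt.tendsto_subseq
  exact ⟨(· + 1) ∘ ψ, fun _ _ h => Nat.succ_lt_succ (hψ h), fun _ => Nat.le_add_left 1 _, hlim⟩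

theorem isGδ_setOf_recPt [TopologicalSpace.PseudoMetrizableSpace α] (hf : Continuous f) :
    IsGδ {x | RecPt f x} := by
  let := TopologicalSpace.pseudoMetrizableSpacePseudoMetric α
  have hchar : {x | RecPt f x} =
      ⋂ m : ℕ, ⋃ n : ℕ, {x | dist x (f^[n + 1] x) < 1 / ((m : ℝ) + 1)} := by
    ext x
    simp only [mem_ofPred_eq, RecPt, Metric.mem_closure_range_iff_nat, mem_iInter, mem_iUnion]
  rw [hchar]
  exact .iInter fun m => (isOpen_iUnion fun n =>
    isOpen_lt (continuous_id.dist (hf.iterate _)) continuous_const).isGδ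

end Recurrence

def lucasSeq {R : Type*} [CommRing R] (P Q : R) : ℕ → R
  | 0 => 0
  | 1 => 1
  | n + 2 => P * lucasSeq P Q (n + 1) - Q * lucasSeq P Q n

section Lucas

variable {R S : Type*} [CommRing R] [CommRing S]

@[simp]
theorem map_lucasSeq (f : R →+* S) (P Q : R) (n : ℕ) :
    f (lucasSeq P Q n) = lucasSeq (f P) (f Q) n := by
  induction n using Nat.strong_induction_on with
  | _ n ih =>
    match n with
    | 0 => simp [lucasSeq]
    | 1 => simp [lucasSeq]
    | n + 2 => simp [lucasSeq, ih n (by omega), ih (n + 1) (by omega)]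

theorem pow_succ_eq_lucasSeq {P Q y : R} (hy : y ^ 2 = P * y - Q) (n : ℕ) :
    y ^ (n + 1) = lucasSeq P Q (n + 1) * y - Q * lucasSeq P Q n := by
  induction n with
  | zero => simp [lucasSeq]
  | succ n ih =>
    rw [pow_succ, ih, lucasSeq]
    linear_combination lucasSeq P Q (n + 1) * hy

theorem tendsto_lucasSeq_zero {P Q : ℝ} (hPQ : P ^ 2 < 4 * Q) (hQ : Q < 1) :
    Tendsto (lucasSeq P Q) atTop (𝓝 0) := by
  set U := lucasSeq P Q
  -- a Lyapunov function: positive definite since `P ^ 2 < 4 * Q`, and multiplied by `Q` each step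
  have henergy : ∀ n, U (n + 1) ^ 2 - P * U (n + 1) * U n + Q * U n ^ 2 = Q ^ n := by
    intro n
    induction n with
    | zero => simp [U, lucasSeq]
    | succ n ih =>
      rw [pow_succ Q, ← ih, show U (n + 2) = P * U (n + 1) - Q * U n from rfl]
      ring
  have hdisc : 0 < Q - P ^ 2 / 4 := by linarith
  have hbound : ∀ n, U n ^ 2 ≤ Q ^ n / (Q - P ^ 2 / 4) := fun n => by
    rw [le_div_iff₀ hdisc, ← henergy]
    nlinarith [sq_nonneg (U (n + 1) - P / 2 * U n)]
  have hsq : Tendsto (fun n => U n ^ 2) atTop (𝓝 0) :=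
    squeeze_zero (fun n => sq_nonneg _) hbound
      (by simpa using (tendsto_pow_atTop_nhds_zero_of_lt_one (by nlinarith) hQ).div_const _)
  rw [tendsto_zero_iff_abs_tendsto_zero]
  simpa [Function.comp_def, Real.sqrt_sq_eq_abs] using (Real.continuous_sqrt.tendsto 0).comp hsq

theorem RCLike.tendsto_lucasSeq_ofReal_zero {𝕜 : Type*} [RCLike 𝕜] {P Q : ℝ}
    (hPQ : P ^ 2 < 4 * Q) (hQ : Q < 1) : Tendsto (lucasSeq (P : 𝕜) Q) atTop (𝓝 0) := by
  simpa [Function.comp_def] using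
    ((RCLike.continuous_ofReal (K := 𝕜)).tendsto 0).comp (tendsto_lucasSeq_zero hPQ hQ)

end Lucas

section Polynomials

theorem AdjoinRoot.root_sq_of_quadratic {R : Type*} [CommRing R] (P Q : R) :
    root (X ^ 2 - C P * X + C Q) ^ 2 = of _ P * root (X ^ 2 - C P * X + C Q) - of _ Q := by
  have h := eval₂_root (X ^ 2 - C P * X + C Q)
  simp only [eval₂_add, eval₂_sub, eval₂_X_pow, eval₂_mul, eval₂_C, eval₂_X] at h
  linear_combination h

variable {K : Type*} [Field K]

theorem C_mul_X_sub_C_comp_C_mul_X {t : K} (ht : t ≠ 0) (u μ : K) :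
    (C u * (X - C μ)).comp (C t * X) = C (u * t) * (X - C (μ / t)) := by
  have hμ : C μ = C t * C (μ / t) := by rw [← C_mul, mul_div_cancel₀ _ ht]
  simp only [mul_comp, sub_comp, C_comp, X_comp, C_mul, hμ]
  ring

theorem C_mul_quadratic_comp_C_mul_X {t : K} (ht : t ≠ 0) (u P Q : K) :
    (C u * (X ^ 2 - C P * X + C Q)).comp (C t * X) =
      C (u * t ^ 2) * (X ^ 2 - C (P / t) * X + C (Q / t ^ 2)) := by
  have hP : C P = C t * C (P / t) := by rw [← C_mul, mul_div_cancel₀ _ ht]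
  have hQ : C Q = C t ^ 2 * C (Q / t ^ 2) := by
    rw [← C_pow, ← C_mul, mul_div_cancel₀ _ (pow_ne_zero 2 ht)]
  simp only [mul_comp, sub_comp, add_comp, pow_comp, C_comp, X_comp, C_mul, C_pow, hP, hQ]
  ring

theorem exists_eq_C_mul_X_sub_C_of_degree_eq_one {g : K[X]} (hg : g.degree = 1) :
    ∃ u ≠ 0, ∃ μ, g = C u * (X - C μ) := by
  have hu : g.leadingCoeff ≠ 0 :=
    leadingCoeff_ne_zero.2 (ne_zero_of_degree_gt (hg ▸ zero_lt_one))
  refine ⟨_, hu, -(g.coeff 0 / g.leadingCoeff), ?_⟩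
  conv_lhs => rw [eq_X_add_C_of_degree_eq_one hg]
  rw [mul_sub, ← C_mul, mul_neg, mul_div_cancel₀ _ hu, C_neg, sub_neg_eq_add]

theorem Real.irreducible_eq_linear_or_quadratic {g : ℝ[X]} (hg : Irreducible g) :
    ∃ u ≠ 0, (∃ μ, g = C u * (X - C μ)) ∨
      ∃ P Q : ℝ, P ^ 2 < 4 * Q ∧ g = C u * (X ^ 2 - C P * X + C Q) := by
  obtain ⟨z, hz⟩ : ∃ z : ℂ, aeval z g = 0 :=
    IsAlgClosed.exists_aeval_eq_zero _ g (degree_pos_of_irreducible hg).ne'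
  by_cases hre : z.im = 0
  · have hroot : g.IsRoot z.re := by
      rw [← Complex.re_add_im z, hre, Complex.ofReal_zero, zero_mul, add_zero] at hz
      rw [← Complex.coe_algebraMap, aeval_algebraMap_apply_eq_algebraMap_eval] at hz
      exact (map_eq_zero _).1 hz
    obtain ⟨u, hu, μ, hμ⟩ := exists_eq_C_mul_X_sub_C_of_degree_eq_one
      (degree_eq_one_of_irreducible_of_root hg hroot)
    exact ⟨u, hu, .inl ⟨μ, hμ⟩⟩
  · obtain ⟨k, hk⟩ := g.quadratic_dvd_of_aeval_eq_zero_im_ne_zero hz hre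
    have hquad : ¬ IsUnit (X ^ 2 - C (2 * z.re) * X + C (‖z‖ ^ 2)) := fun h => by
      have h2 : (X ^ 2 - C (2 * z.re) * X + C (‖z‖ ^ 2)).natDegree = 2 := by compute_degree!
      exact two_ne_zero (h2.symm.trans (natDegree_eq_zero_of_isUnit h))
    obtain ⟨u, hu, rfl⟩ := isUnit_iff.1 ((hg.isUnit_or_isUnit hk).resolve_left hquad)
    refine ⟨u, hu.ne_zero, .inr ⟨2 * z.re, ‖z‖ ^ 2, ?_, by rw [hk, mul_comm]⟩⟩
    rw [Complex.sq_norm, Complex.normSq_apply]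
    nlinarith [mul_self_pos.2 hre]

theorem RCLike.irreducible_eq_linear_or_quadratic {𝕜 : Type*} [RCLike 𝕜] {p : 𝕜[X]}
    (hp : Irreducible p) : ∃ u ≠ 0, (∃ μ, p = C u * (X - C μ)) ∨
      ∃ P Q : ℝ, P ^ 2 < 4 * Q ∧ p = C u * (X ^ 2 - C (P : 𝕜) * X + C (Q : 𝕜)) := by
  rcases RCLike.I_eq_zero_or_im_I_eq_one (K := 𝕜) with hI | hI
  · set e := RCLike.realRingEquiv hI
    have hpe : p = (mapEquiv e).symm (mapEquiv e p) := ((mapEquiv e).symm_apply_apply p).symm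
    obtain ⟨u, hu, ⟨μ, hμ⟩ | ⟨P, Q, hPQ, hPQ'⟩⟩ :=
      Real.irreducible_eq_linear_or_quadratic ((MulEquiv.irreducible_iff (mapEquiv e)).2 hp)
    · exact ⟨e.symm u, (map_ne_zero e.symm).2 hu, .inl ⟨e.symm μ, by rw [hpe, hμ]; simp⟩⟩
    · refine ⟨e.symm u, (map_ne_zero e.symm).2 hu, .inr ⟨P, Q, hPQ, ?_⟩⟩
      rw [hpe, hPQ']
      simp [e]
  · set e := RCLike.complexRingEquiv hI
    have hpe : p = (mapEquiv e).symm (mapEquiv e p) := ((mapEquiv e).symm_apply_apply p).symm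
    obtain ⟨u, hu, μ, hμ⟩ := exists_eq_C_mul_X_sub_C_of_degree_eq_one <|
      IsAlgClosed.degree_eq_one_of_irreducible ℂ ((MulEquiv.irreducible_iff (mapEquiv e)).2 hp)
    exact ⟨e.symm u, (map_ne_zero e.symm).2 hu, .inl ⟨e.symm μ, by rw [hpe, hμ]; simp⟩⟩

end Polynomials

section PolynomialCalculus

variable {𝕜 : Type*} [RCLike 𝕜] {E : Type*} [AddCommGroup E] [Module 𝕜 E] [TopologicalSpace E]
  [IsTopologicalAddGroup E] [ContinuousConstSMul 𝕜 E] {T : E →L[𝕜] E}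

theorem span_orbit_eq_range_aeval (x : E) :
    (Submodule.span 𝕜 (range fun n : ℕ => T^[n] x) : Set E) =
      range fun p : 𝕜[X] => aeval T p x := by
  ext y
  constructor
  · intro hy
    induction hy using Submodule.span_induction with
    | mem _ hy =>
      obtain ⟨n, rfl⟩ := hy
      exact ⟨X ^ n, by simp⟩
    | zero => exact ⟨0, by simp⟩
    | add _ _ _ _ hy hz =>
      obtain ⟨p, rfl⟩ := hy
      obtain ⟨q, rfl⟩ := hz
      exact ⟨p + q, by simp⟩
    | smul a _ _ hy =>
      obtain ⟨p, rfl⟩ := hy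
      exact ⟨a • p, by simp⟩
  · rintro ⟨p, rfl⟩
    show aeval T p x ∈ Submodule.span _ _
    simp only [aeval_eq_sum_range, FunLike.coe_sum, Finset.sum_apply,
      FunLike.coe_smul, Pi.smul_apply, FunLike.coe_pow_eq_iterate]
    exact Submodule.sum_mem _ fun i _ => Submodule.smul_mem _ _ (Submodule.subset_span ⟨i, rfl⟩)

theorem cyclicVector_iff_dense_range_aeval {x : E} :
    CyclicVector T x ↔ Dense (range fun p : 𝕜[X] => aeval T p x) := by
  rw [CyclicVector, span_orbit_eq_range_aeval]

theorem CyclicVector.aeval_apply_of_denseRange {x : E} (hx : CyclicVector T x) {q : 𝕜[X]}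
    (hq : DenseRange (aeval T q)) : CyclicVector T (aeval T q x) := by
  rw [cyclicVector_iff_dense_range_aeval] at hx ⊢
  have hcomm : (range fun p : 𝕜[X] => aeval T p (aeval T q x)) =
      aeval T q '' range fun p : 𝕜[X] => aeval T p x := by
    rw [← range_comp]
    congr 1
    ext p
    exact DFunLike.congr_fun ((Commute.all p q).map (aeval T)).eq x
  rw [hcomm]
  exact hq.dense_image (aeval T q).continuous hx

theorem isGδ_setOf_cyclicVector [SecondCountableTopology E] : IsGδ {x | CyclicVector T x} := by
  obtain ⟨B, hBc, hB₀, hB⟩ := TopologicalSpace.exists_countable_basis E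
  have hchar : {x | CyclicVector T x} = ⋂ U ∈ B, ⋃ p : 𝕜[X], aeval T p ⁻¹' U := by
    ext x
    simp only [mem_ofPred_eq, cyclicVector_iff_dense_range_aeval, hB.dense_iff, mem_iInter,
      mem_iUnion, mem_preimage]
    refine forall₂_congr fun U hU => ?_
    rw [imp_iff_right (nonempty_iff_ne_empty.2 (ne_of_mem_of_not_mem hU hB₀))]
    constructor
    · rintro ⟨_, hyU, p, rfl⟩
      exact ⟨p, hyU⟩
    · rintro ⟨p, hp⟩
      exact ⟨_, hp, p, rfl⟩
  rw [hchar]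
  exact .biInter hBc fun U hU =>
    (isOpen_iUnion fun p => (hB.isOpen hU).preimage (aeval T p).continuous).isGδ

theorem denseRange_aeval_C_mul {c : 𝕜} (hc : c ≠ 0) {p : 𝕜[X]} (hp : DenseRange (aeval T p)) :
    DenseRange (aeval T (C c * p)) := by
  have h : ⇑(aeval T (C c * p)) = (c • ·) ∘ aeval T p := by ext; simp
  rw [h]
  exact (Homeomorph.smulOfNeZero c hc).surjective.denseRange.comp hp (continuous_const_smul c)

theorem denseRange_aeval_C {c : 𝕜} (hc : c ≠ 0) : DenseRange (aeval T (C c)) := by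
  simpa using denseRange_aeval_C_mul (T := T) hc (p := 1) (by simpa using denseRange_id)

theorem aeval_apply_mem_range_of_dvd {p q : 𝕜[X]} (h : p ∣ q) (y : E) :
    aeval T q y ∈ range (aeval T p) := by
  obtain ⟨s, rfl⟩ := h
  exact ⟨aeval T s y, by rw [map_mul]; rfl⟩

theorem CyclicVector.quasiRigid_of_recPt [T1Space E] [FirstCountableTopology E] {x : E}
    (hx : CyclicVector T x) (hr : RecPt T x) : QuasiRigid T := by
  obtain ⟨n, hn, hn₁, hnx⟩ := hr.exists_strictMono_tendsto
  refine ⟨n, hn, hn₁, _, cyclicVector_iff_dense_range_aeval.1 hx, ?_⟩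
  rintro _ ⟨p, rfl⟩
  have hcomm (m : ℕ) : T^[m] (aeval T p x) = aeval T p (T^[m] x) := by
    simpa [FunLike.coe_pow_eq_iterate] using
      DFunLike.congr_fun ((Commute.all (X ^ m) p).map (aeval T)).eq x
  simpa [Function.comp_def, hcomm] using ((aeval T p).continuous.tendsto _).comp hnx

end PolynomialCalculus

theorem eventually_nhdsNE_ne {α : Type*} [TopologicalSpace α] [T1Space α] (a b : α) :
    ∀ᶠ x in 𝓝[≠] a, x ≠ b := by
  rcases eq_or_ne a b with rfl | h
  · exact self_mem_nhdsWithin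
  · exact eventually_ne_nhdsWithin h

section DenseRange

variable {𝕜 : Type*} [RCLike 𝕜] {E : Type*} [AddCommGroup E] [Module 𝕜 E] [TopologicalSpace E]
  [IsTopologicalAddGroup E] [ContinuousSMul 𝕜 E] {T : E →L[𝕜] E}

theorem continuous_aeval_comp_C_mul_X_apply (p : 𝕜[X]) (x : E) :
    Continuous fun t : 𝕜 => aeval T (p.comp (C t * X)) x := by
  simp only [aeval_comp, map_mul, aeval_C, aeval_X, aeval_eq_sum_range (p := p),
    ← Algebra.smul_def, _root_.smul_pow, FunLike.coe_sum, Finset.sum_apply, FunLike.coe_smul,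
    Pi.smul_apply]
  fun_prop

variable [T1Space E] [FirstCountableTopology E]

theorem denseRange_aeval_of_dvd_X_pow_sub (hrec : Dense {x | RecPt T x}) {p : 𝕜[X]}
    {α β : ℕ → 𝕜} (hα : Tendsto α atTop (𝓝 0)) (hβ : Tendsto β atTop (𝓝 0))
    (hp : ∀ᶠ n in atTop, p ∣ X ^ n - (C (α n) * X + C (β n))) : DenseRange (aeval T p) := by
  refine (hrec.mono fun r hr => ?_).of_closure
  obtain ⟨n, hn, -, hnr⟩ := hr.exists_strictMono_tendsto
  have hlim : Tendsto (fun k => aeval T (X ^ n k - (C (α (n k)) * X + C (β (n k)))) r)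
      atTop (𝓝 r) := by
    simpa [FunLike.coe_pow_eq_iterate] using hnr.sub
      (((hα.comp hn.tendsto_atTop).smul_const (T r)).add
        ((hβ.comp hn.tendsto_atTop).smul_const r))
  exact mem_closure_of_tendsto hlim
    ((hn.tendsto_atTop.eventually hp).mono fun k hk => aeval_apply_mem_range_of_dvd hk r)

theorem denseRange_aeval_of_dvd_one_sub (hrec : Dense {x | RecPt T x}) {p : 𝕜[X]}
    {α β : ℕ → 𝕜} (hα : Tendsto α atTop (𝓝 0)) (hβ : Tendsto β atTop (𝓝 0))
    (hp : ∀ᶠ n in atTop, p ∣ 1 - (C (α n) * X + C (β n)) * X ^ n) : DenseRange (aeval T p) := by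
  refine (hrec.mono fun r hr => ?_).of_closure
  obtain ⟨n, hn, -, hnr⟩ := hr.exists_strictMono_tendsto
  have hlim : Tendsto (fun k => aeval T (1 - (C (α (n k)) * X + C (β (n k))) * X ^ n k) r)
      atTop (𝓝 r) := by
    simpa [FunLike.coe_pow_eq_iterate] using tendsto_const_nhds.sub
      (((hα.comp hn.tendsto_atTop).smul ((T.continuous.tendsto r).comp hnr)).add
        ((hβ.comp hn.tendsto_atTop).smul hnr))
  exact mem_closure_of_tendsto hlim
    ((hn.tendsto_atTop.eventually hp).mono fun k hk => aeval_apply_mem_range_of_dvd hk r)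

theorem denseRange_aeval_X_sub_C (hrec : Dense {x | RecPt T x}) {μ : 𝕜} (hμ : ‖μ‖ ≠ 1) :
    DenseRange (aeval T (X - C μ)) := by
  rcases hμ.lt_or_gt with hμ | hμ
  · refine denseRange_aeval_of_dvd_X_pow_sub hrec (α := 0) (β := (μ ^ ·)) tendsto_const_nhds
      (tendsto_pow_atTop_nhds_zero_of_norm_lt_one hμ) (.of_forall fun n => ?_)
    simpa using X_sub_C_dvd_sub_C_eval (p := X ^ n) (a := μ)
  · have hμ₀ : μ ≠ 0 := by rintro rfl; norm_num at hμ
    refine denseRange_aeval_of_dvd_one_sub hrec (α := 0) (β := (μ⁻¹ ^ ·)) tendsto_const_nhds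
      (tendsto_pow_atTop_nhds_zero_of_norm_lt_one (norm_inv μ ▸ inv_lt_one_of_one_lt₀ hμ))
      (.of_forall fun n => ?_)
    rw [dvd_iff_isRoot]
    simp [hμ₀]

theorem denseRange_aeval_quadratic_of_lt_one (hrec : Dense {x | RecPt T x}) {P Q : ℝ}
    (hPQ : P ^ 2 < 4 * Q) (hQ : Q < 1) :
    DenseRange (aeval T (X ^ 2 - C (P : 𝕜) * X + C (Q : 𝕜))) := by
  have hU := RCLike.tendsto_lucasSeq_ofReal_zero (𝕜 := 𝕜) hPQ hQ
  refine denseRange_aeval_of_dvd_X_pow_sub hrec (α := lucasSeq (P : 𝕜) Q)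
    (β := fun n => -(Q * lucasSeq (P : 𝕜) Q (n - 1))) hU
    (by simpa using (hU.comp (tendsto_sub_atTop_nat 1)).const_mul (-(Q : 𝕜)))
    (eventually_atTop.2 ⟨1, fun n hn => ?_⟩)
  obtain ⟨m, rfl⟩ := Nat.exists_eq_add_of_le' hn
  rw [← AdjoinRoot.mk_eq_zero]
  simp only [map_sub, map_add, map_mul, map_pow, map_neg, AdjoinRoot.mk_X, AdjoinRoot.mk_C,
    map_lucasSeq, Nat.add_sub_cancel]
  linear_combination pow_succ_eq_lucasSeq (AdjoinRoot.root_sq_of_quadratic (P : 𝕜) Q) m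

theorem denseRange_aeval_quadratic_of_one_lt (hrec : Dense {x | RecPt T x}) {P Q : ℝ}
    (hPQ : P ^ 2 < 4 * Q) (hQ : 1 < Q) :
    DenseRange (aeval T (X ^ 2 - C (P : 𝕜) * X + C (Q : 𝕜))) := by
  set p : 𝕜[X] := X ^ 2 - C (P : 𝕜) * X + C (Q : 𝕜)
  set ι := AdjoinRoot.of p
  set y := AdjoinRoot.root p
  have hy : y ^ 2 = ι P * y - ι Q := AdjoinRoot.root_sq_of_quadratic _ _
  set q : 𝕜 := (Q : 𝕜)⁻¹
  have hq : ι Q * ι q = 1 := by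
    rw [← map_mul, mul_inv_cancel₀ (RCLike.ofReal_ne_zero.2 (by positivity)), map_one]
  -- `z = y⁻¹` is a root of the reversed quadratic, whose roots lie inside the unit disc
  set z := ι q * (ι P - y)
  have hyz : y * z = 1 := by linear_combination (-ι q) * hy + hq
  have hz : z ^ 2 = ι P * ι q * z - ι q := by linear_combination (ι q ^ 2) * hy - ι q * hq
  have hPQ' : (P / Q) ^ 2 < 4 * Q⁻¹ := by
    rw [div_pow, div_lt_iff₀ (by positivity)]
    field_simp
    linarith
  have hV : Tendsto (lucasSeq ((P : 𝕜) * q) q) atTop (𝓝 0) := by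
    simpa [q, div_eq_mul_inv] using
      RCLike.tendsto_lucasSeq_ofReal_zero (𝕜 := 𝕜) hPQ' (inv_lt_one_of_one_lt₀ hQ)
  refine denseRange_aeval_of_dvd_one_sub hrec (α := fun n => -(q * lucasSeq (P * q) q n))
    (β := fun n => q * (P * lucasSeq (P * q) q n - lucasSeq (P * q) q (n - 1)))
    (by simpa using (hV.const_mul q).neg)
    (by simpa using
      ((hV.const_mul (P : 𝕜)).sub (hV.comp (tendsto_sub_atTop_nat 1))).const_mul q)
    (eventually_atTop.2 ⟨1, fun n hn => ?_⟩)
  obtain ⟨m, rfl⟩ := Nat.exists_eq_add_of_le' hn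
  rw [← AdjoinRoot.mk_eq_zero]
  simp only [map_sub, map_add, map_mul, map_pow, map_neg, map_one, AdjoinRoot.mk_X,
    AdjoinRoot.mk_C, map_lucasSeq, Nat.add_sub_cancel]
  have hyz' : y ^ (m + 1) * z ^ (m + 1) = 1 := by rw [← mul_pow, hyz, one_pow]
  linear_combination -hyz' + y ^ (m + 1) * pow_succ_eq_lucasSeq hz m

theorem denseRange_aeval_quadratic (hrec : Dense {x | RecPt T x}) {P Q : ℝ}
    (hPQ : P ^ 2 < 4 * Q) (hQ : Q ≠ 1) :
    DenseRange (aeval T (X ^ 2 - C (P : 𝕜) * X + C (Q : 𝕜))) :=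
  hQ.lt_or_gt.elim (denseRange_aeval_quadratic_of_lt_one hrec hPQ)
    (denseRange_aeval_quadratic_of_one_lt hrec hPQ)

theorem Irreducible.eventually_denseRange_aeval_comp (hrec : Dense {x | RecPt T x}) {p : 𝕜[X]}
    (hp : Irreducible p) :
    ∀ᶠ t : ℝ in 𝓝[≠] 1, DenseRange (aeval T (p.comp (C (t : 𝕜) * X))) := by
  have hpos : ∀ᶠ t : ℝ in 𝓝[≠] 1, 0 < t :=
    eventually_nhdsWithin_of_eventually_nhds (eventually_gt_nhds one_pos)
  obtain ⟨u, hu, ⟨μ, rfl⟩ | ⟨P, Q, hPQ, rfl⟩⟩ := RCLike.irreducible_eq_linear_or_quadratic hp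
  · filter_upwards [hpos, eventually_nhdsNE_ne 1 ‖μ‖] with t ht htμ
    have ht' : (t : 𝕜) ≠ 0 := RCLike.ofReal_ne_zero.2 ht.ne'
    rw [C_mul_X_sub_C_comp_C_mul_X ht']
    refine denseRange_aeval_C_mul (mul_ne_zero hu ht') (denseRange_aeval_X_sub_C hrec ?_)
    rw [norm_div, RCLike.norm_ofReal, abs_of_pos ht, Ne, div_eq_one_iff_eq ht.ne']
    exact htμ.symm
  · filter_upwards [hpos, eventually_nhdsNE_ne 1 √Q] with t ht htQ
    have ht' : (t : 𝕜) ≠ 0 := RCLike.ofReal_ne_zero.2 ht.ne'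
    have hdisc : (P / t) ^ 2 < 4 * (Q / t ^ 2) := by
      rw [div_pow, mul_div_assoc']
      exact div_lt_div_of_pos_right hPQ (by positivity)
    have hQt : Q / t ^ 2 ≠ 1 := by
      rw [Ne, div_eq_one_iff_eq (by positivity)]
      rintro rfl
      exact htQ (Real.sqrt_sq ht.le).symm
    have hquad := denseRange_aeval_quadratic (𝕜 := 𝕜) (T := T) hrec hdisc hQt
    push_cast at hquad
    rw [C_mul_quadratic_comp_C_mul_X ht']
    exact denseRange_aeval_C_mul (mul_ne_zero hu (pow_ne_zero 2 ht')) hquad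

theorem eventually_denseRange_aeval_comp (hrec : Dense {x | RecPt T x}) {p : 𝕜[X]}
    (hp : p ≠ 0) :
    ∀ᶠ t : ℝ in 𝓝[≠] 1, DenseRange (aeval T (p.comp (C (t : 𝕜) * X))) := by
  induction p using WfDvdMonoid.induction_on_irreducible with
  | zero => exact absurd rfl hp
  | unit p hunit =>
    obtain ⟨c, hc, rfl⟩ := isUnit_iff.1 hunit
    exact .of_forall fun t => by simpa using denseRange_aeval_C (T := T) hc.ne_zero
  | mul p i hp₀ hi ih =>
    filter_upwards [ih hp₀, hi.eventually_denseRange_aeval_comp hrec] with t hpt hit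
    rw [mul_comp, map_mul]
    exact hit.comp hpt (aeval T _).continuous

theorem CyclicVector.aeval_apply_mem_closure (hrec : Dense {x | RecPt T x}) {x : E}
    (hx : CyclicVector T x) (p : 𝕜[X]) : aeval T p x ∈ closure {y | CyclicVector T y} := by
  rcases eq_or_ne p 0 with rfl | hp
  · have hlim :
        Tendsto (fun c : 𝕜 => aeval T (C c) x) (𝓝[≠] 0) (𝓝 (aeval T (0 : 𝕜[X]) x)) := by
      have hsmul : Tendsto (fun c : 𝕜 => c • x) (𝓝 0) (𝓝 ((0 : 𝕜) • x)) :=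
        (continuous_id.smul continuous_const).tendsto 0
      simpa using hsmul.mono_left nhdsWithin_le_nhds
    exact mem_closure_of_tendsto hlim
      (eventually_mem_nhdsWithin.mono fun c hc =>
        hx.aeval_apply_of_denseRange (denseRange_aeval_C hc))
  · have hlim : Tendsto (fun t : ℝ => aeval T (p.comp (C (t : 𝕜) * X)) x) (𝓝[≠] 1)
        (𝓝 (aeval T p x)) := by
      simpa [Function.comp_def] using (((continuous_aeval_comp_C_mul_X_apply p x).comp
        RCLike.continuous_ofReal).tendsto 1).mono_left nhdsWithin_le_nhds
    exact mem_closure_of_tendsto hlim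
      ((eventually_denseRange_aeval_comp hrec hp).mono fun _ ht =>
        hx.aeval_apply_of_denseRange ht)

theorem dense_setOf_cyclicVector (hrec : Dense {x | RecPt T x}) {x : E}
    (hx : CyclicVector T x) : Dense {y | CyclicVector T y} :=
  ((cyclicVector_iff_dense_range_aeval.1 hx).mono
    (range_subset_iff.2 (hx.aeval_apply_mem_closure hrec))).of_closure

end DenseRange

theorem stmt7_general {𝕜 : Type*} [RCLike 𝕜] {X : Type*} [AddCommGroup X] [Module 𝕜 X]
    [TopologicalSpace X] [IsTopologicalAddGroup X] [ContinuousSMul 𝕜 X] [PolishSpace X]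
    (T : X →L[𝕜] X) (hrec : Dense {x : X | RecPt (⇑T) x})
    (hcyc : ∃ x : X, CyclicVector T x) :
    (IsGδ {x : X | CyclicVector T x} ∧ Dense {x : X | CyclicVector T x}) ∧
      QuasiRigid ⇑T := by
  obtain ⟨x₀, hx₀⟩ := hcyc
  have hGδ : IsGδ {x | CyclicVector T x} := isGδ_setOf_cyclicVector
  have hdense : Dense {x | CyclicVector T x} := dense_setOf_cyclicVector hrec hx₀
  obtain ⟨x, hxC, hxR⟩ :=
    (hdense.inter_of_Gδ hGδ (isGδ_setOf_recPt T.continuous) hrec).nonempty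
  exact ⟨⟨hGδ, hdense⟩, hxC.quasiRigid_of_recPt hxR⟩

/-- If a continuous linear operator `T` on a separable infinite-dimensional F-space is
recurrent and cyclic, then its set of cyclic vectors is a dense Gδ subset of `X`; in
particular `T` is quasi-rigid. -/
theorem stmt7 {𝕜 : Type*} [RCLike 𝕜] {X : Type*} [AddCommGroup X] [Module 𝕜 X]
    [TopologicalSpace X] [IsTopologicalAddGroup X] [ContinuousSMul 𝕜 X] [PolishSpace X]
    (hX : ¬ FiniteDimensional 𝕜 X)
    (T : X →L[𝕜] X) (hrec : Dense {x : X | RecPt (⇑T) x})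
    (hcyc : ∃ x : X, CyclicVector T x) :
    (IsGδ {x : X | CyclicVector T x} ∧ Dense {x : X | CyclicVector T x}) ∧
      QuasiRigid ⇑T :=
  stmt7_general T hrec hcyc
end

section
/- Let (X,T) be a dynamical system. The following are equivalent: (i) T is quasi-rigid; (ii) there exists an infinite set A ⊆ ℕ₀ such that T is F(A)-recurrent, where F(A) = {B ⊆ ℕ₀ : A \ B is finite} is the free filter generated by A; (iii) T is F-recurrent for some Furstenberg family F which is a filter (closed under finite intersections) possessing a countable base. Moreover, if X is second-countable, these are also equivalent to: (iv) T is F-recurrent for some Furstenberg family F with the finite intersection property (every finite subcollection of F has non-empty intersection). -/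
open Filter Topology Set

/-- A Furstenberg family: a collection of infinite subsets of `ℕ₀`, hereditarily upward,
and closed under removing finite initial segments. -/
def IsFurstenbergFamily (F : Set (Set ℕ)) : Prop :=
  (∀ A ∈ F, A.Infinite) ∧ (∀ A ∈ F, ∀ B : Set ℕ, A ⊆ B → B ∈ F) ∧
  (∀ A ∈ F, ∀ n : ℕ, (A ∩ {m : ℕ | n ≤ m}) ∈ F)

/-- The return set `N(x,U) = {n ∈ ℕ₀ : T^n x ∈ U}`. -/
def retSet {X : Type*} (T : X → X) (x : X) (U : Set X) : Set ℕ :=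
  {n : ℕ | T^[n] x ∈ U}

/-- `x` is an `F`-recurrent point for `T`. -/
def FRecPt {X : Type*} [TopologicalSpace X] (F : Set (Set ℕ)) (T : X → X) (x : X) : Prop :=
  ∀ U ∈ 𝓝 x, retSet T x U ∈ F

/-- The free (Fréchet) filter generated by an infinite set `A ⊆ ℕ₀`. -/
def freeFilterGen (A : Set ℕ) : Set (Set ℕ) :=
  {B : Set ℕ | (A \ B).Finite}

/-! ### Auxiliary lemmas -/

lemma aux_seqChoice (S : ℕ → Set ℕ)
    (h : ∀ k N : ℕ, ∃ n, N ≤ n ∧ ∀ i ≤ k, n ∈ S i) :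
    ∃ nk : ℕ → ℕ, StrictMono nk ∧ (∀ k, 1 ≤ nk k) ∧ ∀ k, ∀ i ≤ k, nk k ∈ S i := by
  choose f h1 h2 using h
  let g : ℕ → ℕ := fun k => Nat.rec (f 0 1) (fun k prev => f (k + 1) (prev + 1)) k
  have hg0 : g 0 = f 0 1 := rfl
  have hgs : ∀ k, g (k + 1) = f (k + 1) (g k + 1) := fun k => rfl
  have hmono : StrictMono g := by
    apply strictMono_nat_of_lt_succ
    intro k
    have := h1 (k + 1) (g k + 1)
    rw [hgs]; omega
  refine ⟨g, hmono, ?_, ?_⟩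
  · intro k
    induction k with
    | zero => have := h1 0 1; rw [hg0]; omega
    | succ k ih =>
      have := h1 (k + 1) (g k + 1); rw [hgs]; omega
  · intro k
    cases k with
    | zero => rw [hg0]; exact h2 0 1
    | succ k => rw [hgs]; exact h2 (k + 1) (g k + 1)

lemma aux_ffg_furstenberg {A : Set ℕ} (hA : A.Infinite) :
    IsFurstenbergFamily (freeFilterGen A) := by
  refine ⟨?_, ?_, ?_⟩
  · intro B hB
    have h1 : (A \ (A \ B)).Infinite := hA.diff hB
    rw [Set.diff_diff_right_self] at h1
    exact h1.mono Set.inter_subset_right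
  · intro B hB C hBC
    exact (hB.subset (fun x hx => ⟨hx.1, fun hc => hx.2 (hBC hc)⟩) : (A \ C).Finite)
  · intro B hB n
    have : A \ (B ∩ {m : ℕ | n ≤ m}) ⊆ (A \ B) ∪ {m : ℕ | m < n} := by
      intro x hx
      by_cases hxB : x ∈ B
      · right
        simp only [Set.mem_setOf_eq]
        by_contra h
        exact hx.2 ⟨hxB, by simp only [Set.mem_setOf_eq]; omega⟩
      · left; exact ⟨hx.1, hxB⟩
    exact Set.Finite.subset (hB.union (Set.finite_lt_nat n)) this

lemma aux_ffg_inter {A : Set ℕ} :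
    ∀ B ∈ freeFilterGen A, ∀ C ∈ freeFilterGen A, B ∩ C ∈ freeFilterGen A := by
  intro B hB C hC
  have : A \ (B ∩ C) = (A \ B) ∪ (A \ C) := by
    ext x; simp only [Set.mem_diff, Set.mem_inter_iff, Set.mem_union]; tauto
  show (A \ (B ∩ C)).Finite
  rw [this]; exact hB.union hC

lemma aux_ffg_base {A : Set ℕ} :
    (∀ k, A ∩ {m : ℕ | k ≤ m} ∈ freeFilterGen A) ∧
    ∀ B ∈ freeFilterGen A, ∃ k, A ∩ {m : ℕ | k ≤ m} ⊆ B := by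
  constructor
  · intro k
    have : A \ (A ∩ {m : ℕ | k ≤ m}) ⊆ {m : ℕ | m < k} := by
      intro x hx
      simp only [Set.mem_setOf_eq]
      by_contra h
      exact hx.2 ⟨hx.1, by simp only [Set.mem_setOf_eq]; omega⟩
    exact Set.Finite.subset (Set.finite_lt_nat k) this
  · intro B hB
    obtain ⟨k, hk⟩ := (hB : (A \ B).Finite).bddAbove
    refine ⟨k + 1, fun x hx => ?_⟩
    by_contra hxB
    have := hk ⟨hx.1, hxB⟩
    have := hx.2
    simp only [Set.mem_setOf_eq] at this
    omega

/-- From a Furstenberg filter with countable base and dense recurrent points, quasi-rigidity. -/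
lemma aux_iii_to_i {X : Type*} [TopologicalSpace X] (T : X → X)
    (h : ∃ F : Set (Set ℕ), IsFurstenbergFamily F ∧
          (∀ A ∈ F, ∀ B ∈ F, A ∩ B ∈ F) ∧
          (∃ g : ℕ → Set ℕ, (∀ k, g k ∈ F) ∧ ∀ A ∈ F, ∃ k, g k ⊆ A) ∧
          Dense {x : X | FRecPt F T x}) : QuasiRigid T := by
  obtain ⟨F, ⟨hInf, _, hTail⟩, hInter, ⟨g, hgF, hgbase⟩, hdense⟩ := h
  have hkey : ∀ k N : ℕ, ∃ n, N ≤ n ∧ ∀ i ≤ k, n ∈ g i := by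
    intro k N
    have hIk : ∀ k : ℕ, ∃ B ∈ F, ∀ i ≤ k, B ⊆ g i := by
      intro k
      induction k with
      | zero =>
        refine ⟨g 0, hgF 0, fun i hi => ?_⟩
        have : i = 0 := Nat.le_zero.mp hi
        rw [this]
      | succ k ih =>
        obtain ⟨B, hBF, hB⟩ := ih
        refine ⟨B ∩ g (k + 1), hInter B hBF (g (k + 1)) (hgF (k + 1)), fun i hi => ?_⟩
        rcases Nat.lt_or_ge i (k + 1) with h' | h'
        · exact fun x hx => hB i (by omega) hx.1
        · have : i = k + 1 := by omega
          rw [this]; exact fun x hx => hx.2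
    obtain ⟨B, hBF, hB⟩ := hIk k
    have hBN : B ∩ {m : ℕ | N ≤ m} ∈ F := hTail B hBF N
    obtain ⟨n, hn⟩ := (hInf _ hBN).nonempty
    exact ⟨n, hn.2, fun i hi => hB i hi hn.1⟩
  obtain ⟨nk, hmono, hone, hmem⟩ := aux_seqChoice g hkey
  refine ⟨nk, hmono, hone, {x : X | FRecPt F T x}, hdense, ?_⟩
  intro y hy
  rw [Filter.tendsto_def]
  intro U hU
  obtain ⟨j, hj⟩ := hgbase _ (hy U hU)
  rw [Filter.mem_atTop_sets]
  exact ⟨j, fun k hk => hj (hmem k j hk)⟩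

/-- Quasi-rigidity gives free-filter recurrence. -/
lemma aux_i_to_ii {X : Type*} [TopologicalSpace X] (T : X → X) (h : QuasiRigid T) :
    ∃ A : Set ℕ, A.Infinite ∧ Dense {x : X | FRecPt (freeFilterGen A) T x} := by
  obtain ⟨nk, hmono, _, Y, hYd, hYt⟩ := h
  refine ⟨Set.range nk, Set.infinite_range_of_injective hmono.injective, ?_⟩
  apply hYd.mono
  intro y hy U hU
  have hev := (hYt y hy).eventually_mem hU
  rw [Filter.eventually_atTop] at hev
  obtain ⟨K, hK⟩ := hev
  show (Set.range nk \ retSet T y U).Finite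
  apply Set.Finite.subset ((Set.finite_Iio K).image nk)
  rintro m ⟨⟨k, rfl⟩, hm2⟩
  refine ⟨k, ?_, rfl⟩
  simp only [Set.mem_Iio]
  by_contra h
  exact hm2 (hK k (by omega))

/-- In a second-countable space, a family with FIP and dense recurrent points gives
quasi-rigidity. -/
lemma aux_iv_to_i {X : Type*} [TopologicalSpace X] [SecondCountableTopology X]
    (T : X → X)
    (h : ∃ F : Set (Set ℕ), IsFurstenbergFamily F ∧
          (∀ 𝒜 : Finset (Set ℕ), ↑𝒜 ⊆ F → (⋂₀ (𝒜 : Set (Set ℕ))).Nonempty) ∧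
          Dense {x : X | FRecPt F T x}) : QuasiRigid T := by
  classical
  obtain ⟨F, ⟨hInf, hUp, hTail⟩, hFIP, hdense⟩ := h
  by_cases hX : Nonempty X
  · -- countable dense set of recurrent points
    set R := {x : X | FRecPt F T x} with hR
    obtain ⟨s, hsc, hsd⟩ := TopologicalSpace.exists_countable_dense ↥R
    have hDd : Dense (Subtype.val '' s) :=
      DenseRange.dense_image hdense.denseRange_val continuous_subtype_val hsd
    have hDc : (Subtype.val '' s : Set X).Countable := (hsc.image _)
    have hDsub : (Subtype.val '' s : Set X) ⊆ R := by
      rintro _ ⟨⟨x, hx⟩, _, rfl⟩; exact hx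
    have hne : (Subtype.val '' s : Set X).Nonempty := hDd.nonempty
    obtain ⟨x, hx⟩ := hDc.exists_eq_range hne
    have hxR : ∀ i, x i ∈ R := fun i => hDsub (hx ▸ ⟨i, rfl⟩)
    -- neighbourhood bases
    have hcb : ∀ i : ℕ, ∃ V : ℕ → Set X, (𝓝 (x i)).HasAntitoneBasis V := fun i =>
      (𝓝 (x i)).exists_antitone_basis
    choose V hV using hcb
    set S : ℕ → Set ℕ := fun n => retSet T (x n.unpair.1) (V n.unpair.1 n.unpair.2) with hS
    have hSF : ∀ n, S n ∈ F := fun n =>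
      hxR n.unpair.1 _ ((hV n.unpair.1).mem n.unpair.2)
    have hkey : ∀ k N : ℕ, ∃ n, N ≤ n ∧ ∀ i ≤ k, n ∈ S i := by
      intro k N
      set 𝒜 : Finset (Set ℕ) :=
        (Finset.range (k + 1)).image (fun i => S i ∩ {m : ℕ | N ≤ m}) with h𝒜
      have hsub : ↑𝒜 ⊆ F := by
        intro B hB
        simp only [h𝒜, Finset.coe_image, Set.mem_image, Finset.coe_range, Set.mem_Iio] at hB
        obtain ⟨i, _, rfl⟩ := hB
        exact hTail _ (hSF i) N
      obtain ⟨n, hn⟩ := hFIP 𝒜 hsub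
      refine ⟨n, ?_, ?_⟩
      · have : S 0 ∩ {m : ℕ | N ≤ m} ∈ (𝒜 : Set (Set ℕ)) := by
          simp only [h𝒜, Finset.coe_image, Set.mem_image, Finset.coe_range, Set.mem_Iio]
          exact ⟨0, by omega, rfl⟩
        exact (hn _ this).2
      · intro i hi
        have : S i ∩ {m : ℕ | N ≤ m} ∈ (𝒜 : Set (Set ℕ)) := by
          simp only [h𝒜, Finset.coe_image, Set.mem_image, Finset.coe_range, Set.mem_Iio]
          exact ⟨i, by omega, rfl⟩
        exact (hn _ this).1
    obtain ⟨nk, hmono, hone, hmem⟩ := aux_seqChoice S hkey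
    refine ⟨nk, hmono, hone, Subtype.val '' s, hDd, ?_⟩
    intro y hy
    obtain ⟨i, hi⟩ : ∃ i, x i = y := by
      rw [hx] at hy
      exact hy
    subst hi
    rw [Filter.tendsto_def]
    intro U hU
    obtain ⟨j, -, hj⟩ := (hV i).toHasBasis.mem_iff.mp hU
    rw [Filter.mem_atTop_sets]
    refine ⟨Nat.pair i j, fun k hk => ?_⟩
    have := hmem k (Nat.pair i j) hk
    simp only [hS, Nat.unpair_pair] at this
    exact hj this
  · refine ⟨fun k => k + 1, fun a b hab => Nat.add_lt_add_right hab 1,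
      fun k => Nat.succ_le_succ (Nat.zero_le k), ∅, ?_, ?_⟩
    · intro x; exact absurd ⟨x⟩ hX
    · intro y hy; exact absurd hy (Set.notMem_empty y)

/-- Quasi-rigidity is equivalent to `F(A)`-recurrence for some infinite `A`, and to
`F`-recurrence for a free filter Furstenberg family with a countable base; if moreover
`X` is second-countable these are equivalent to `F`-recurrence for a family with the
finite intersection property. -/
theorem stmt9 {X : Type*} [TopologicalSpace X] [T2Space X]
    (T : X → X) (hT : Continuous T) :
    ((QuasiRigid T ↔
        ∃ A : Set ℕ, A.Infinite ∧ Dense {x : X | FRecPt (freeFilterGen A) T x}) ∧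
     (QuasiRigid T ↔
        ∃ F : Set (Set ℕ), IsFurstenbergFamily F ∧
          (∀ A ∈ F, ∀ B ∈ F, A ∩ B ∈ F) ∧
          (∃ g : ℕ → Set ℕ, (∀ k, g k ∈ F) ∧ ∀ A ∈ F, ∃ k, g k ⊆ A) ∧
          Dense {x : X | FRecPt F T x})) ∧
    (SecondCountableTopology X →
      (QuasiRigid T ↔
        ∃ F : Set (Set ℕ), IsFurstenbergFamily F ∧
          (∀ 𝒜 : Finset (Set ℕ), ↑𝒜 ⊆ F → (⋂₀ (𝒜 : Set (Set ℕ))).Nonempty) ∧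
          Dense {x : X | FRecPt F T x})) := by
  classical
  -- (ii) → (iii)
  have h23 : (∃ A : Set ℕ, A.Infinite ∧ Dense {x : X | FRecPt (freeFilterGen A) T x}) →
      ∃ F : Set (Set ℕ), IsFurstenbergFamily F ∧
        (∀ A ∈ F, ∀ B ∈ F, A ∩ B ∈ F) ∧
        (∃ g : ℕ → Set ℕ, (∀ k, g k ∈ F) ∧ ∀ A ∈ F, ∃ k, g k ⊆ A) ∧
        Dense {x : X | FRecPt F T x} := by
    rintro ⟨A, hA, hd⟩
    exact ⟨freeFilterGen A, aux_ffg_furstenberg hA, aux_ffg_inter,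
      ⟨fun k => A ∩ {m : ℕ | k ≤ m}, aux_ffg_base.1, aux_ffg_base.2⟩, hd⟩
  -- (ii) → (iv)
  have h24 : (∃ A : Set ℕ, A.Infinite ∧ Dense {x : X | FRecPt (freeFilterGen A) T x}) →
      ∃ F : Set (Set ℕ), IsFurstenbergFamily F ∧
        (∀ 𝒜 : Finset (Set ℕ), ↑𝒜 ⊆ F → (⋂₀ (𝒜 : Set (Set ℕ))).Nonempty) ∧
        Dense {x : X | FRecPt F T x} := by
    rintro ⟨A, hA, hd⟩
    refine ⟨freeFilterGen A, aux_ffg_furstenberg hA, ?_, hd⟩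
    have hmem : ∀ 𝒜 : Finset (Set ℕ), ↑𝒜 ⊆ freeFilterGen A →
        ⋂₀ (𝒜 : Set (Set ℕ)) ∈ freeFilterGen A := by
      intro 𝒜
      induction 𝒜 using Finset.induction_on with
      | empty =>
        intro _
        simp only [Finset.coe_empty, Set.sInter_empty]
        show (A \ Set.univ).Finite
        simp
      | @insert B 𝒜' hni ih =>
        intro h𝒜
        rw [Finset.coe_insert, Set.sInter_insert]
        refine aux_ffg_inter B ?_ _ (ih ?_)
        · exact h𝒜 (by simp)
        · intro C hC; exact h𝒜 (by simp [hC])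
    intro 𝒜 h𝒜
    exact ((aux_ffg_furstenberg hA).1 _ (hmem 𝒜 h𝒜)).nonempty
  refine ⟨⟨⟨aux_i_to_ii T, fun h => aux_iii_to_i T (h23 h)⟩,
    ⟨fun h => h23 (aux_i_to_ii T h), aux_iii_to_i T⟩⟩, ?_⟩
  intro hsc
  exact ⟨fun h => h24 (aux_i_to_ii T h), fun h => aux_iv_to_i T h⟩
end

section
/- Let (X,T) be a dynamical system. Then for every positive integer p, the set of recurrent points of T equals the set of recurrent points of T^p: Rec(T) = Rec(T^p). -/
open Filter Topology Set

/-- For every positive integer `p`, `Rec(T) = Rec(T^p)`. -/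
theorem stmt10 {X : Type*} [TopologicalSpace X] [T2Space X]
    (T : X → X) (hT : Continuous T) (p : ℕ) (hp : 1 ≤ p) :
    {x : X | RecPt T x} = {x : X | RecPt (T^[p]) x} := by
  ext x
  simp only [Set.mem_setOf_eq]
  constructor
  · intro hx
    rw [RecPt, mem_closure_iff]
    intro U hU hxU
    -- step lemma: from an open nbhd V of x, get a return time and a smaller nbhd
    have key : ∀ V : {V : Set X // IsOpen V ∧ x ∈ V},
        ∃ q : ℕ × {V : Set X // IsOpen V ∧ x ∈ V},
          q.2.1 ⊆ V.1 ∧ ∀ y ∈ q.2.1, T^[q.1 + 1] y ∈ V.1 := by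
      rintro ⟨V, hV, hxV⟩
      obtain ⟨y, hyV, n, rfl⟩ := mem_closure_iff.mp hx V hV hxV
      refine ⟨(n, ⟨V ∩ (T^[n + 1]) ⁻¹' V,
        hV.inter (((hT.iterate _)).isOpen_preimage V hV), hxV, hyV⟩), inter_subset_left, ?_⟩
      intro z hz
      exact hz.2
    choose step hsub hmap using key
    -- F k = (partial sum of return times, k-th neighborhood)
    let F : ℕ → ℕ × {V : Set X // IsOpen V ∧ x ∈ V} :=
      fun k => Nat.rec (0, ⟨U, hU, hxU⟩) (fun _ q => (q.1 + ((step q.2).1 + 1), (step q.2).2)) k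
    have hF0 : F 0 = (0, ⟨U, hU, hxU⟩) := rfl
    have hFsucc : ∀ k, F (k + 1) = ((F k).1 + ((step (F k).2).1 + 1), (step (F k).2).2) :=
      fun k => rfl
    have hmono : StrictMono fun k => (F k).1 := by
      apply strictMono_nat_of_lt_succ
      intro k
      rw [hFsucc]
      omega
    have hsubU : ∀ k, (F k).2.1 ⊆ U := by
      intro k
      induction k with
      | zero => exact fun y hy => hy
      | succ k ih =>
        rw [hFsucc]
        exact fun y hy => ih (hsub (F k).2 hy)
    have horbit : ∀ d i, T^[(F (i + d)).1 - (F i).1] x ∈ (F i).2.1 := by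
      intro d
      induction d with
      | zero => intro i; simpa using (F i).2.2.2
      | succ d ih =>
        intro i
        have h1 : (F (i + 1 + d)).1 - (F i).1 =
            ((step (F i).2).1 + 1) + ((F (i + 1 + d)).1 - (F (i + 1)).1) := by
          have := hmono.monotone (Nat.le_add_right (i + 1) d)
          rw [hFsucc]
          rw [hFsucc] at this
          omega
        have h2 : i + (d + 1) = i + 1 + d := by omega
        rw [h2, h1, Function.iterate_add_apply]
        exact hmap (F i).2 _ (ih (i + 1))
    -- pigeonhole mod p on the p+1 partial sums (F 0).1, …, (F p).1
    have hmaps : ∀ k ∈ (Finset.univ : Finset (Fin (p + 1))),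
        (F (k : ℕ)).1 % p ∈ Finset.range p := by
      intro k _
      exact Finset.mem_range.mpr (Nat.mod_lt _ hp)
    obtain ⟨i, _, j, _, hne, heq⟩ :=
      Finset.exists_ne_map_eq_of_card_lt_of_maps_to
        (by simp : (Finset.range p).card < (Finset.univ : Finset (Fin (p + 1))).card) hmaps
    -- WLOG i < j
    have hne' : (i : ℕ) ≠ (j : ℕ) := fun h => hne (Fin.ext h)
    wlog hij : (i : ℕ) < (j : ℕ) generalizing i j
    · exact this j (Finset.mem_univ j) i (Finset.mem_univ i) hne.symm heq.symm
        (fun h => hne' h.symm) (by omega)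
    · have hlt : (F (i : ℕ)).1 < (F (j : ℕ)).1 := hmono hij
      have hdvd : p ∣ (F (j : ℕ)).1 - (F (i : ℕ)).1 :=
        (Nat.modEq_iff_dvd' hlt.le).mp heq
      obtain ⟨m, hm⟩ := hdvd
      have hpos : 0 < (F (j : ℕ)).1 - (F (i : ℕ)).1 := by omega
      have hmpos : 1 ≤ m := Nat.one_le_iff_ne_zero.mpr (by rintro rfl; omega)
      refine ⟨T^[(F (j : ℕ)).1 - (F (i : ℕ)).1] x, ?_, ⟨m - 1, ?_⟩⟩
      · have := horbit ((j : ℕ) - (i : ℕ)) (i : ℕ)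
        rw [Nat.add_sub_cancel' hij.le] at this
        exact hsubU _ this
      · show (T^[p])^[m - 1 + 1] x = _
        rw [← Function.iterate_mul]
        congr 1
        have h1 : m - 1 + 1 = m := by omega
        rw [h1, hm]
  · intro hx
    refine closure_mono ?_ hx
    rintro _ ⟨n, rfl⟩
    refine ⟨p * (n + 1) - 1, ?_⟩
    show T^[p * (n + 1) - 1 + 1] x = (T^[p])^[n + 1] x
    rw [← Function.iterate_mul]
    congr 1
    have : 1 ≤ p * (n + 1) := Nat.one_le_iff_ne_zero.mpr (by positivity)
    omega
end

section
/- Let (X,T) be a complex linear dynamical system. Then for every λ ∈ ℂ with |λ| = 1, the set of recurrent points of T equals the set of recurrent points of λT: Rec(T) = Rec(λT). -/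
/-! For `|λ| = 1` let `F (z, y) = (λ z, T y)` be the skew product of `T` with the rotation
by `λ` on the circle. The closure `L` of the `F`-orbit of `(1, x)` is forward invariant, and since
`F` commutes with the rotations `(z, y) ↦ (z w, y)`, the set `{z | (z, x) ∈ L}` is a closed
subsemigroup of the circle; it is nonempty because `x` is recurrent and the circle is compact.
A nonempty closed subsemigroup of a compact group contains `1`, so `(1, x)` is recurrent for `F`,
and pushing forward along `(z, y) ↦ z • y` shows that `x` is recurrent for `λ T`. -/

open Filter Topology Set

open Function

/-- `RecPt T x` unfolds to `x ∈ closure (forwardOrbit T x)`. -/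
def forwardOrbit {X : Type*} (T : X → X) (x : X) : Set X :=
  range fun n : ℕ => T^[n + 1] x

theorem Function.Semiconj.image_forwardOrbit {α β : Type*} {Φ : α → β} {F : α → α} {S : β → β}
    (h : Semiconj Φ F S) (p : α) : Φ '' forwardOrbit F p = forwardOrbit S (Φ p) := by
  rw [forwardOrbit, ← range_comp]
  exact congrArg range (funext fun n => h.iterate_right (n + 1) p)

theorem iterate_succ_image_forwardOrbit_subset {α : Type*} (F : α → α) (n : ℕ) (p : α) :
    F^[n + 1] '' forwardOrbit F p ⊆ forwardOrbit F p := by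
  rintro _ ⟨_, ⟨m, rfl⟩, rfl⟩
  exact ⟨n + m + 1, by rw [← iterate_add_apply, show n + 1 + (m + 1) = n + m + 1 + 1 by omega]⟩

section Orbit

variable {X Y : Type*} [TopologicalSpace X] [TopologicalSpace Y]

theorem Function.Semiconj.image_closure_forwardOrbit_subset {Φ : X → Y} {F : X → X} {S : Y → Y}
    (h : Semiconj Φ F S) (hΦ : Continuous Φ) (p : X) :
    Φ '' closure (forwardOrbit F p) ⊆ closure (forwardOrbit S (Φ p)) :=
  h.image_forwardOrbit p ▸ image_closure_subset_closure_image hΦ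

theorem Function.Semiconj.recPt {Φ : X → Y} {F : X → X} {S : Y → Y} (h : Semiconj Φ F S)
    (hΦ : Continuous Φ) {p : X} (hp : RecPt F p) : RecPt S (Φ p) :=
  h.image_closure_forwardOrbit_subset hΦ p (mem_image_of_mem Φ hp)

theorem closure_forwardOrbit_subset {F : X → X} (hF : Continuous F) {p q : X}
    (hq : q ∈ closure (forwardOrbit F p)) :
    closure (forwardOrbit F q) ⊆ closure (forwardOrbit F p) := by
  refine closure_minimal (range_subset_iff.2 fun n => ?_) isClosed_closure
  have hF' : Continuous F^[n + 1] := hF.iterate _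
  exact closure_mono (iterate_succ_image_forwardOrbit_subset F n p)
    (image_closure_subset_closure_image hF' (mem_image_of_mem _ hq))

end Orbit

theorem one_mem_of_isClosed_of_mul_mem {G : Type*} [Group G] [TopologicalSpace G]
    [IsTopologicalGroup G] [CompactSpace G] {S : Set G} (hS : IsClosed S) (hne : S.Nonempty)
    (hmul : ∀ a ∈ S, ∀ b ∈ S, a * b ∈ S) : (1 : G) ∈ S := by
  obtain ⟨a, ha⟩ := hne
  have hpow : ∀ n : ℕ, a ^ (n + 1) ∈ S := by
    intro n
    induction n with
    | zero => simpa using ha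
    | succ n ih => rw [pow_succ]; exact hmul _ ih _ ha
  refine hS.mem_of_mapClusterPt (mapClusterPt_one_atTop_pow a) ?_
  filter_upwards [eventually_ge_atTop 1] with n hn
  obtain ⟨k, rfl⟩ := Nat.exists_eq_add_of_le' hn
  exact hpow k

section SkewProduct

variable {G X : Type*} [Group G] [TopologicalSpace G] [IsTopologicalGroup G] [CompactSpace G]
  [TopologicalSpace X] {T : X → X} {x : X}

theorem RecPt.prodMap_mul_left (hT : Continuous T) (hx : RecPt T x) (g : G) :
    RecPt (Prod.map (g * ·) T) (1, x) := by
  set F := Prod.map (g * ·) T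
  have hF : Continuous F := (continuous_const_mul g).prodMap hT
  set L := closure (forwardOrbit F (1, x))
  suffices (1 : G) ∈ {h : G | (h, x) ∈ L} from this
  refine one_mem_of_isClosed_of_mul_mem
    (isClosed_closure.preimage (continuous_id.prodMk continuous_const)) ?_ ?_
  · have hsnd : Semiconj Prod.snd F T := fun _ => rfl
    have : x ∈ Prod.snd '' L := by
      rw [← isClosedMap_snd_of_compactSpace.closure_image_eq_of_continuous continuous_snd,
        hsnd.image_forwardOrbit]
      exact hx
    obtain ⟨⟨h, _⟩, hL, rfl⟩ := this
    exact ⟨h, hL⟩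
  · intro h hh k hk
    have hR : Semiconj (fun p : G × X => (p.1 * k, p.2)) F F :=
      fun p => Prod.ext (mul_assoc g p.1 k) rfl
    have := hR.image_closure_forwardOrbit_subset (by fun_prop) (1, x) (mem_image_of_mem _ hh)
    simp only [one_mul] at this
    exact closure_forwardOrbit_subset hF hk this

variable [MulAction G X] [ContinuousSMul G X]

theorem RecPt.smul_comp (hT : Continuous T) (hTG : ∀ (h : G) (y : X), T (h • y) = h • T y)
    (hx : RecPt T x) (g : G) : RecPt (fun y => g • T y) x := by
  have hΦ : Semiconj (fun p : G × X => p.1 • p.2) (Prod.map (g * ·) T) (fun y => g • T y) :=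
    fun p => show (g * p.1) • T p.2 = g • T (p.1 • p.2) by rw [mul_smul, hTG]
  simpa only [one_smul] using hΦ.recPt continuous_smul (hx.prodMap_mul_left hT g)

end SkewProduct

theorem recPt_smul_comp_iff {G X : Type*} [CommGroup G] [TopologicalSpace G]
    [IsTopologicalGroup G] [CompactSpace G] [TopologicalSpace X] [MulAction G X]
    [ContinuousSMul G X] {T : X → X} (hT : Continuous T)
    (hTG : ∀ (h : G) (y : X), T (h • y) = h • T y) (g : G) {x : X} :
    RecPt (fun y => g • T y) x ↔ RecPt T x := by
  refine ⟨fun hx => ?_, fun hx => hx.smul_comp hT hTG g⟩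
  have hgTG : ∀ (h : G) (y : X), g • T (h • y) = h • g • T y := fun h y => by
    rw [hTG, smul_smul, mul_comm, ← smul_smul]
  have := hx.smul_comp (T := fun y => g • T y) (hT.const_smul g) hgTG g⁻¹
  simpa only [inv_smul_smul] using this

theorem stmt11_general {X : Type*} [AddCommGroup X] [Module ℂ X] [TopologicalSpace X]
    [ContinuousSMul ℂ X]
    (T : X →L[ℂ] X) (lam : ℂ) (hlam : ‖lam‖ = 1) :
    {x : X | RecPt (⇑T) x} = {x : X | RecPt (fun y : X => lam • T y) x} := by
  let μ : Circle := ⟨lam, mem_sphere_zero_iff_norm.2 hlam⟩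
  ext x
  exact (recPt_smul_comp_iff (G := Circle) T.continuous
    (fun h y => by simp only [Circle.smul_def, map_smul]) μ).symm

/-- For a continuous linear operator `T` on a separable infinite-dimensional complex
F-space and any unimodular `λ ∈ ℂ`, `Rec(T) = Rec(λT)`. -/
theorem stmt11 {X : Type*} [AddCommGroup X] [Module ℂ X] [TopologicalSpace X]
    [IsTopologicalAddGroup X] [ContinuousSMul ℂ X] [PolishSpace X]
    (hX : ¬ FiniteDimensional ℂ X)
    (T : X →L[ℂ] X) (lam : ℂ) (hlam : ‖lam‖ = 1) :
    {x : X | RecPt (⇑T) x} = {x : X | RecPt (fun y : X => lam • T y) x} :=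
  stmt11_general T lam hlam
end

section
/- Let (X,T) be a dynamical system, let x ∈ X and let 0 < δ ≤ 1. The following are equivalent: (i) x is a periodic point of T whose period is at most ⌊1/δ⌋ (i.e. T^p x = x for some 1 ≤ p ≤ ⌊1/δ⌋); (ii) Bd⁻(N(x,U)) ≥ δ for every neighbourhood U of x; (iii) d⁻(N(x,U)) ≥ δ for every neighbourhood U of x; (iv) d⁺(N(x,U)) ≥ δ for every neighbourhood U of x; (v) Bd⁺(N(x,U)) ≥ δ for every neighbourhood U of x. -/
open Filter Topology Set

/-- The number of elements of `A` in the window `[a, b]`. -/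
noncomputable def windowCount (A : Set ℕ) (a b : ℕ) : ℕ :=
  Nat.card ↥(A ∩ Set.Icc a b)

/-- The upper Banach density of `A ⊆ ℕ₀`. -/
noncomputable def upperBanachDensity (A : Set ℕ) : ℝ :=
  Filter.limsup
    (fun N : ℕ => ⨆ n : ℕ, (windowCount A (n + 1) (n + N) : ℝ) / N) Filter.atTop

/-- The lower Banach density of `A ⊆ ℕ₀`. -/
noncomputable def lowerBanachDensity (A : Set ℕ) : ℝ :=
  Filter.liminf
    (fun N : ℕ => ⨅ n : ℕ, (windowCount A (n + 1) (n + N) : ℝ) / N) Filter.atTop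

/-- The upper density of `A ⊆ ℕ₀`. -/
noncomputable def upperDensity (A : Set ℕ) : ℝ :=
  Filter.limsup (fun N : ℕ => (windowCount A 1 N : ℝ) / N) Filter.atTop

/-- The lower density of `A ⊆ ℕ₀`. -/
noncomputable def lowerDensity (A : Set ℕ) : ℝ :=
  Filter.liminf (fun N : ℕ => (windowCount A 1 N : ℝ) / N) Filter.atTop

lemma windowCount_eq_ncard (A : Set ℕ) (a b : ℕ) :
    windowCount A a b = (A ∩ Set.Icc a b).ncard :=
  Nat.card_coe_set_eq _

lemma windowCount_le (A : Set ℕ) (a b : ℕ) : windowCount A a b ≤ b + 1 - a := by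
  rw [windowCount_eq_ncard]
  calc (A ∩ Set.Icc a b).ncard ≤ (Set.Icc a b).ncard :=
        Set.ncard_le_ncard inter_subset_right (Set.finite_Icc a b)
    _ = b + 1 - a := by
        rw [← Finset.coe_Icc, Set.ncard_coe_finset, Nat.card_Icc]

lemma term_nonneg (A : Set ℕ) (n N : ℕ) : 0 ≤ (windowCount A (n + 1) (n + N) : ℝ) / N := by
  positivity

lemma term_le_one (A : Set ℕ) (n N : ℕ) : (windowCount A (n + 1) (n + N) : ℝ) / N ≤ 1 := by
  rcases Nat.eq_zero_or_pos N with h | h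
  · simp [h]
  · rw [div_le_one (by exact_mod_cast h)]
    have h1 := windowCount_le A (n + 1) (n + N)
    exact_mod_cast (by omega : windowCount A (n + 1) (n + N) ≤ N)

lemma bddAbove_term (A : Set ℕ) (N : ℕ) :
    BddAbove (Set.range fun n : ℕ => (windowCount A (n + 1) (n + N) : ℝ) / N) :=
  ⟨1, by rintro y ⟨n, rfl⟩; exact term_le_one A n N⟩

lemma bddBelow_term (A : Set ℕ) (N : ℕ) :
    BddBelow (Set.range fun n : ℕ => (windowCount A (n + 1) (n + N) : ℝ) / N) :=
  ⟨0, by rintro y ⟨n, rfl⟩; exact term_nonneg A n N⟩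

lemma lbd_le_ld (A : Set ℕ) : lowerBanachDensity A ≤ lowerDensity A := by
  apply Filter.liminf_le_liminf
  · refine Eventually.of_forall fun N => ?_
    have h := ciInf_le (bddBelow_term A N) 0
    simpa using h
  · exact Filter.isBoundedUnder_of ⟨0, fun N => le_ciInf fun n => term_nonneg A n N⟩
  · exact (Filter.isBoundedUnder_of
      ⟨1, fun N => by simpa using term_le_one A 0 N⟩).isCoboundedUnder_ge

lemma ld_le_ud (A : Set ℕ) : lowerDensity A ≤ upperDensity A := by
  apply Filter.liminf_le_limsup
  · exact Filter.isBoundedUnder_of ⟨1, fun N => by simpa using term_le_one A 0 N⟩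
  · exact Filter.isBoundedUnder_of ⟨0, fun N => by simpa using term_nonneg A 0 N⟩

lemma ud_le_ubd (A : Set ℕ) : upperDensity A ≤ upperBanachDensity A := by
  apply Filter.limsup_le_limsup
  · refine Eventually.of_forall fun N => ?_
    have h := le_ciSup (bddAbove_term A N) 0
    simpa using h
  · exact (Filter.isBoundedUnder_of
      ⟨0, fun N => by simpa using term_nonneg A 0 N⟩).isCoboundedUnder_le
  · exact Filter.isBoundedUnder_of ⟨1, fun N => ciSup_le fun n => term_le_one A n N⟩

lemma nat_lt_div_succ_mul (n : ℕ) {p : ℕ} (hp : 0 < p) : n < (n / p + 1) * p := by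
  rcases Nat.lt_or_ge n ((n / p + 1) * p) with h' | h'
  · exact h'
  · exfalso
    have h3 : n / p + 1 ≤ n / p := (Nat.le_div_iff_mul_le hp).2 h'
    omega

lemma count_multiples_le (A : Set ℕ) {p : ℕ} (hp : 0 < p)
    (hmul : ∀ k : ℕ, k * p ∈ A) (n N : ℕ) :
    N / p ≤ windowCount A (n + 1) (n + N) := by
  rw [windowCount_eq_ncard]
  have hsub : (fun k => (n / p + 1 + k) * p) '' Set.Iio (N / p)
      ⊆ A ∩ Set.Icc (n + 1) (n + N) := by
    rintro - ⟨k, hk, rfl⟩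
    refine ⟨hmul _, ?_, ?_⟩
    · calc n + 1 ≤ (n / p + 1) * p := nat_lt_div_succ_mul n hp
        _ ≤ (n / p + 1 + k) * p := Nat.mul_le_mul_right _ (by omega)
    · have h2 : n / p * p ≤ n := Nat.div_mul_le_self n p
      have h3 : N / p * p ≤ N := Nat.div_mul_le_self N p
      have hk' : k < N / p := hk
      calc (n / p + 1 + k) * p ≤ (n / p + N / p) * p :=
            Nat.mul_le_mul_right _ (by omega)
        _ = n / p * p + N / p * p := by ring
        _ ≤ n + N := by omega
  have hinj : Function.Injective (fun k : ℕ => (n / p + 1 + k) * p) := by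
    intro a b hab
    simp only at hab
    have := Nat.eq_of_mul_eq_mul_right hp hab
    omega
  calc N / p = (Set.Iio (N / p)).ncard := by
        rw [← Finset.coe_Iio, Set.ncard_coe_finset, Nat.card_Iio]
    _ = ((fun k => (n / p + 1 + k) * p) '' Set.Iio (N / p)).ncard :=
        (Set.ncard_image_of_injective _ hinj).symm
    _ ≤ (A ∩ Set.Icc (n + 1) (n + N)).ncard :=
        Set.ncard_le_ncard hsub ((Set.finite_Icc _ _).inter_of_right _)

lemma lbd_ge (A : Set ℕ) {p : ℕ} (hp : 0 < p) (hmul : ∀ k, k * p ∈ A)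
    {δ : ℝ} (hδ : δ ≤ 1 / p) : δ ≤ lowerBanachDensity A := by
  have hpr : (0 : ℝ) < p := by exact_mod_cast hp
  have key : ∀ N : ℕ, 1 ≤ N →
      δ - 1 / N ≤ ⨅ n : ℕ, (windowCount A (n + 1) (n + N) : ℝ) / N := by
    intro N hN
    refine le_ciInf fun n => ?_
    have hNr : (0 : ℝ) < N := by exact_mod_cast hN
    have h1 : (N / p : ℕ) ≤ windowCount A (n + 1) (n + N) := count_multiples_le A hp hmul n N
    have h3 : (N : ℝ) / p - 1 ≤ ((N / p : ℕ) : ℝ) := by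
      have hc : (N : ℝ) < (((N / p : ℕ) : ℝ) + 1) * p := by
        exact_mod_cast nat_lt_div_succ_mul N hp
      rw [sub_le_iff_le_add, div_le_iff₀ hpr]
      nlinarith
    calc δ - 1 / N ≤ 1 / p - 1 / N := by linarith
      _ = ((N : ℝ) / p - 1) / N := by field_simp
      _ ≤ ((N / p : ℕ) : ℝ) / N := by gcongr
      _ ≤ (windowCount A (n + 1) (n + N) : ℝ) / N := by
          have h1' : ((N / p : ℕ) : ℝ) ≤ (windowCount A (n + 1) (n + N) : ℝ) := by
            exact_mod_cast h1
          gcongr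
  have ht : Tendsto (fun N : ℕ => δ - 1 / N) atTop (𝓝 δ) := by
    have := tendsto_one_div_atTop_nhds_zero_nat.const_sub δ
    simpa using this
  calc δ = Filter.liminf (fun N : ℕ => δ - 1 / N) atTop := ht.liminf_eq.symm
    _ ≤ lowerBanachDensity A := by
        apply Filter.liminf_le_liminf
        · exact eventually_atTop.2 ⟨1, key⟩
        · refine Filter.isBoundedUnder_of ⟨δ - 1, fun N => ?_⟩
          have : 1 / (N : ℝ) ≤ 1 := by
            rcases Nat.eq_zero_or_pos N with h | h
            · simp [h]
            · rw [div_le_one (by exact_mod_cast h)]; exact_mod_cast h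
          linarith
        · refine (Filter.isBoundedUnder_of ⟨1, fun N => ?_⟩).isCoboundedUnder_ge
          exact (ciInf_le (bddBelow_term A N) 0).trans (by simpa using term_le_one A 0 N)

lemma count_gap (A : Set ℕ) {P : ℕ} (hgap : ∀ m ∈ A, ∀ k ∈ A, m < k → m + P < k)
    (n N : ℕ) : windowCount A (n + 1) (n + N) ≤ (N - 1) / (P + 1) + 1 := by
  rw [windowCount_eq_ncard]
  have hPpos : 0 < P + 1 := Nat.succ_pos P
  have key : (A ∩ Set.Icc (n + 1) (n + N)).ncard ≤ (Set.Iio ((N - 1) / (P + 1) + 1)).ncard := by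
    refine Set.ncard_le_ncard_of_injOn (fun m => (m - (n + 1)) / (P + 1)) ?_ ?_ ?_
    · rintro m ⟨hmA, hm1, hm2⟩
      have : m - (n + 1) ≤ N - 1 := by omega
      exact Nat.lt_succ_of_le (Nat.div_le_div_right this)
    · rintro m ⟨hmA, hm1, hm2⟩ m' ⟨hmA', hm1', hm2'⟩ hq
      simp only at hq
      by_contra hne
      have hgap' : m - (n + 1) + (P + 1) ≤ m' - (n + 1) ∨
          m' - (n + 1) + (P + 1) ≤ m - (n + 1) := by
        rcases Nat.lt_or_ge m m' with h | h
        · left; have := hgap m hmA m' hmA' h; omega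
        · right
          have hlt : m' < m := by omega
          have := hgap m' hmA' m hmA hlt; omega
      set a := m - (n + 1) with ha
      set b := m' - (n + 1) with hb
      have h1 : a / (P + 1) * (P + 1) ≤ a := Nat.div_mul_le_self a (P + 1)
      have h2 : a < (a / (P + 1) + 1) * (P + 1) := nat_lt_div_succ_mul a hPpos
      have h3 : b / (P + 1) * (P + 1) ≤ b := Nat.div_mul_le_self b (P + 1)
      have h4 : b < (b / (P + 1) + 1) * (P + 1) := nat_lt_div_succ_mul b hPpos
      rw [hq] at h1 h2
      have h5 : (b / (P + 1) + 1) * (P + 1) = b / (P + 1) * (P + 1) + P + 1 := by ring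
      rw [h5] at h2 h4
      generalize b / (P + 1) * (P + 1) = t at h1 h2 h3 h4
      omega
    · exact (Set.finite_Iio _)
  calc (A ∩ Set.Icc (n + 1) (n + N)).ncard ≤ (Set.Iio ((N - 1) / (P + 1) + 1)).ncard := key
    _ = (N - 1) / (P + 1) + 1 := by rw [← Finset.coe_Iio, Set.ncard_coe_finset, Nat.card_Iio]

lemma ubd_le (A : Set ℕ) {P : ℕ} (hgap : ∀ m ∈ A, ∀ k ∈ A, m < k → m + P < k) :
    upperBanachDensity A ≤ 1 / (P + 1) := by
  have hPr : (0 : ℝ) < (P : ℝ) + 1 := by positivity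
  have key : ∀ N : ℕ, 1 ≤ N →
      (⨆ n : ℕ, (windowCount A (n + 1) (n + N) : ℝ) / N) ≤ 1 / ((P : ℝ) + 1) + 1 / N := by
    intro N hN
    have hNr : (0 : ℝ) < N := by exact_mod_cast hN
    refine ciSup_le fun n => ?_
    have h1 := count_gap A hgap n N
    have h2 : ((windowCount A (n + 1) (n + N) : ℕ) : ℝ) ≤ (N : ℝ) / ((P : ℝ) + 1) + 1 := by
      have h3 : (((N - 1) / (P + 1) : ℕ) : ℝ) ≤ (N : ℝ) / ((P : ℝ) + 1) := by
        rw [le_div_iff₀ hPr]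
        have h4 : ((N - 1) / (P + 1)) * (P + 1) ≤ N :=
          le_trans (Nat.div_mul_le_self _ _) (by omega)
        exact_mod_cast h4
      have h5 : ((windowCount A (n + 1) (n + N) : ℕ) : ℝ) ≤ (((N - 1) / (P + 1) : ℕ) : ℝ) + 1 := by
        exact_mod_cast h1
      linarith
    calc (windowCount A (n + 1) (n + N) : ℝ) / N ≤ ((N : ℝ) / ((P : ℝ) + 1) + 1) / N := by gcongr
      _ = 1 / ((P : ℝ) + 1) + 1 / N := by field_simp
  have ht : Tendsto (fun N : ℕ => 1 / ((P : ℝ) + 1) + 1 / N) atTop (𝓝 (1 / ((P : ℝ) + 1))) := by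
    have := tendsto_one_div_atTop_nhds_zero_nat.const_add (1 / ((P : ℝ) + 1))
    simpa using this
  have hle : upperBanachDensity A ≤
      Filter.limsup (fun N : ℕ => 1 / ((P : ℝ) + 1) + 1 / N) atTop := by
    apply Filter.limsup_le_limsup
    · exact eventually_atTop.2 ⟨1, key⟩
    · refine (Filter.isBoundedUnder_of ⟨0, fun N => ?_⟩).isCoboundedUnder_le
      exact le_trans (term_nonneg A 0 N) (le_ciSup (bddAbove_term A N) 0)
    · refine Filter.isBoundedUnder_of ⟨1 / ((P : ℝ) + 1) + 1, fun N => ?_⟩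
      have : 1 / (N : ℝ) ≤ 1 := by
        rcases Nat.eq_zero_or_pos N with h | h
        · simp [h]
        · rw [div_le_one (by exact_mod_cast h)]; exact_mod_cast h
      linarith
  have hpush : (1 : ℝ) / ((P : ℝ) + 1) = 1 / (((P : ℕ) : ℝ) + 1) := rfl
  calc upperBanachDensity A ≤ _ := hle
    _ = 1 / ((P : ℝ) + 1) := ht.limsup_eq

/-- For a point `x` of a dynamical system and `0 < δ ≤ 1`, being periodic with period at
most `⌊1/δ⌋` is equivalent to all return sets to neighbourhoods of `x` having lower
Banach density (resp. lower density, upper density, upper Banach density) at least `δ`. -/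
theorem stmt13 {X : Type*} [TopologicalSpace X] [T2Space X]
    (T : X → X) (hT : Continuous T) (x : X) (δ : ℝ) (hδ0 : 0 < δ) (hδ1 : δ ≤ 1) :
    List.TFAE
      [∃ p : ℕ, 1 ≤ p ∧ p ≤ Nat.floor (1 / δ) ∧ T^[p] x = x,
       ∀ U ∈ 𝓝 x, δ ≤ lowerBanachDensity (retSet T x U),
       ∀ U ∈ 𝓝 x, δ ≤ lowerDensity (retSet T x U),
       ∀ U ∈ 𝓝 x, δ ≤ upperDensity (retSet T x U),
       ∀ U ∈ 𝓝 x, δ ≤ upperBanachDensity (retSet T x U)] := by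
  tfae_have 1 → 2 := by
    rintro ⟨p, hp1, hpP, hper⟩ U hU
    have hpr : (0 : ℝ) < p := by exact_mod_cast hp1
    have hδp : δ ≤ 1 / (p : ℝ) := by
      have h1 : (p : ℝ) ≤ 1 / δ := by
        calc (p : ℝ) ≤ (Nat.floor (1 / δ) : ℝ) := by exact_mod_cast hpP
          _ ≤ 1 / δ := Nat.floor_le (by positivity)
      rw [le_div_iff₀ hpr]
      calc δ * p ≤ δ * (1 / δ) := mul_le_mul_of_nonneg_left h1 hδ0.le
        _ = 1 := by field_simp
    refine lbd_ge _ hp1 (fun k => ?_) hδp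
    show T^[k * p] x ∈ U
    have hfix : T^[k * p] x = x := by
      rw [Nat.mul_comm, Function.iterate_mul]
      exact Function.iterate_fixed hper k
    rw [hfix]; exact mem_of_mem_nhds hU
  tfae_have 2 → 3 := fun h U hU => le_trans (h U hU) (lbd_le_ld _)
  tfae_have 3 → 4 := fun h U hU => le_trans (h U hU) (ld_le_ud _)
  tfae_have 4 → 5 := fun h U hU => le_trans (h U hU) (ud_le_ubd _)
  tfae_have 5 → 1 := by
    intro h5
    by_contra hc
    push_neg at hc
    set P := Nat.floor (1 / δ) with hP
    have sep : ∀ p : ℕ, ∃ u v : Set X, IsOpen u ∧ x ∈ u ∧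
        (1 ≤ p → p ≤ P → IsOpen v ∧ T^[p] x ∈ v ∧ Disjoint u v) := by
      intro p
      by_cases hp : 1 ≤ p ∧ p ≤ P
      · obtain ⟨u, v, hu, hv, hxu, hxv, hd⟩ :=
          t2_separation (Ne.symm (hc p hp.1 hp.2))
        exact ⟨u, v, hu, hxu, fun _ _ => ⟨hv, hxv, hd⟩⟩
      · exact ⟨Set.univ, Set.univ, isOpen_univ, Set.mem_univ x,
          fun h1 h2 => absurd ⟨h1, h2⟩ hp⟩
    choose V W hVo hxV hrest using sep
    set U := ⋂ p ∈ Finset.Icc 1 P, (V p ∩ T^[p] ⁻¹' W p) with hUdef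
    have hUnhds : U ∈ 𝓝 x := by
      refine (Filter.biInter_finset_mem _).2 fun p hp => ?_
      obtain ⟨h1, h2⟩ := Finset.mem_Icc.1 hp
      refine Filter.inter_mem ((hVo p).mem_nhds (hxV p)) ?_
      exact ContinuousAt.preimage_mem_nhds (hT.iterate p).continuousAt
        (((hrest p h1 h2).1).mem_nhds (hrest p h1 h2).2.1)
    have hgap : ∀ m ∈ retSet T x U, ∀ k ∈ retSet T x U, m < k → m + P < k := by
      intro m hm k hk hmk
      by_contra hle
      push_neg at hle
      set p := k - m with hpdef
      have hp1 : 1 ≤ p := by omega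
      have hpP : p ≤ P := by omega
      have hpmem : p ∈ Finset.Icc 1 P := Finset.mem_Icc.2 ⟨hp1, hpP⟩
      have hmU : T^[m] x ∈ U := hm
      have hkU : T^[k] x ∈ U := hk
      have h1 : T^[m] x ∈ V p ∩ T^[p] ⁻¹' W p := by
        rw [hUdef] at hmU
        exact Set.mem_iInter₂.1 hmU p hpmem
      have h2 : T^[k] x ∈ V p := by
        rw [hUdef] at hkU
        exact (Set.mem_iInter₂.1 hkU p hpmem).1
      have h3 : T^[k] x ∈ W p := by
        have hh : T^[p] (T^[m] x) ∈ W p := h1.2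
        rwa [← Function.iterate_add_apply, (by omega : p + m = k)] at hh
      exact Set.disjoint_left.1 (hrest p hp1 hpP).2.2 h2 h3
    have hub := ubd_le (retSet T x U) hgap
    have hδle := h5 U hUnhds
    have hfl : (1 : ℝ) / ((P : ℝ) + 1) < δ := by
      rw [div_lt_iff₀ (by positivity)]
      have hlt : 1 / δ < (P : ℝ) + 1 := by
        rw [hP]; exact_mod_cast Nat.lt_floor_add_one (1 / δ)
      have h2 := mul_lt_mul_of_pos_left hlt hδ0
      rw [mul_one_div, div_self hδ0.ne'] at h2
      linarith
    linarith
  tfae_finish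
end

section
/- Let (X,T) be a dynamical system, let F be a Furstenberg family, and let x ∈ FRec(T). Let C_T = {S : X → X continuous : S ∘ T = T ∘ S} and C_T(x) = {Sx : S ∈ C_T}. Then N_pr(C_T(x)) = N_pr({x}), and for every N ∈ ℕ and all S_1, …, S_N ∈ C_T, the tuple (S_1 x, …, S_N x) ∈ X^N is an F-recurrent point of the N-fold product map T_(N); that is, C_T(x)^N ⊆ FRec(T_(N)) for every N ∈ ℕ. -/
open Filter Topology Set

/-- The family `N_pr(Y)` of pointwise-recurrent return sets of the points of `Y`. -/
def Npr {X : Type*} [TopologicalSpace X] (T : X → X) (Y : Set X) : Set (Set ℕ) :=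
  {A : Set ℕ | ∃ y ∈ Y, ∃ U ∈ 𝓝 y, retSet T y U ⊆ A}

/-- The `C_T`-orbit of `x`: images of `x` under continuous maps commuting with `T`. -/
def commOrbit {X : Type*} [TopologicalSpace X] (T : X → X) (x : X) : Set X :=
  {y : X | ∃ S : X → X, Continuous S ∧ S ∘ T = T ∘ S ∧ S x = y}


lemma comm_iter {X : Type*} {S T : X → X} (h : S ∘ T = T ∘ S) :
    ∀ n (x : X), S (T^[n] x) = T^[n] (S x) := by
  intro n
  induction n with
  | zero => intro x; simp
  | succ n ih =>
    intro x
    rw [Function.iterate_succ_apply, Function.iterate_succ_apply, ih]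
    exact congrArg _ (congrFun h x)

lemma prodMap_iter {X : Type*} (T : X → X) (N n : ℕ) (z : Fin N → X) (i : Fin N) :
    (prodMap T N)^[n] z i = T^[n] (z i) := by
  induction n generalizing z with
  | zero => rfl
  | succ n ih => rw [Function.iterate_succ_apply, Function.iterate_succ_apply, ih]; rfl

/-- For an `F`-recurrent point `x`, `N_pr(C_T(x)) = N_pr({x})`, and every `N`-tuple of
points of the `C_T`-orbit of `x` is an `F`-recurrent point of `T_(N)`. -/
theorem stmt16 {X : Type*} [TopologicalSpace X] [T2Space X]
    (T : X → X) (hT : Continuous T)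
    (F : Set (Set ℕ)) (hF : IsFurstenbergFamily F)
    (x : X) (hx : FRecPt F T x) :
    Npr T (commOrbit T x) = Npr T {x} ∧
    ∀ N : ℕ, ∀ z : Fin N → X, (∀ i, z i ∈ commOrbit T x) →
      FRecPt F (prodMap T N) z := by
  obtain ⟨hinf, hup, htail⟩ := hF
  constructor
  · apply Set.eq_of_subset_of_subset
    · rintro A ⟨y, ⟨S, hS, hcomm, rfl⟩, U, hU, hsub⟩
      refine ⟨x, rfl, S ⁻¹' U, hS.continuousAt.preimage_mem_nhds hU, ?_⟩
      intro n hn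
      apply hsub
      show T^[n] (S x) ∈ U
      rw [← comm_iter hcomm]
      exact hn
    · rintro A ⟨y, hy, U, hU, hsub⟩
      rw [Set.mem_singleton_iff] at hy
      subst hy
      exact ⟨y, ⟨id, continuous_id, rfl, rfl⟩, U, hU, hsub⟩
  · intro N z hz U hU
    choose S hScont hScomm hSx using hz
    rw [nhds_pi, Filter.mem_pi] at hU
    obtain ⟨I, hI, V, hV, hVU⟩ := hU
    set W : Set X := ⋂ i ∈ I, (S i) ⁻¹' (V i) with hW
    have hWnhds : W ∈ 𝓝 x := by
      refine (Filter.biInter_mem hI).2 fun i hi => ?_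
      exact (hScont i).continuousAt.preimage_mem_nhds (hSx i ▸ hV i)
    refine hup _ (hx W hWnhds) _ fun n hn => ?_
    show (prodMap T N)^[n] z ∈ U
    apply hVU
    intro i hi
    rw [prodMap_iter, ← hSx i, ← comm_iter (hScomm i)]
    exact Set.mem_iInter₂.1 hn i hi
end

section
/- Let (X,T) be a complex linear dynamical system and let x ∈ Rec(T) be a recurrent vector for T. Then x ∈ span(E(T)) if and only if span{T^n x : n ∈ ℕ₀} is finite-dimensional, where E(T) = {y ∈ X \ {0} : Ty = λy for some λ ∈ ℂ with |λ| = 1} is the set of unimodular eigenvectors of T. -/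
/-!
Recurrence of `x` yields an ultrafilter `l ≤ atTop` on `ℕ` along which `T^n x → x`. The vectors `v`
with `T^n v → v` along `l` form a `T`-invariant subspace; its intersection with the
finite-dimensional orbit span of `x` splits into generalized eigenspaces, and there every
generalized eigenvector is a unimodular eigenvector. Indeed, for a Jordan chain `T w = μ w`,
`T u = μ u + w` with `w ≠ 0`, the recurrence of `T^n w = μ^n w` forces `|μ| = 1`, and then
`T^n u = μ^n (u + n μ⁻¹ w)` cannot return to `u` unless `w = 0`.
Conversely, finitely many eigenvectors span a finite-dimensional invariant subspace, which
contains the whole orbit of any of its vectors.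
-/

open Filter Topology Set

def unimodEigenvectors {X : Type*} [AddCommGroup X] [Module ℂ X] (T : X → X) : Set X :=
  {y : X | y ≠ 0 ∧ ∃ lam : ℂ, ‖lam‖ = 1 ∧ T y = lam • y}

theorem Submodule.span_range_iterate_le {R M : Type*} [Semiring R] [AddCommMonoid M] [Module R M]
    {f : M → M} {p : Submodule R M} (hp : ∀ y ∈ p, f y ∈ p) {x : M} (hx : x ∈ p) :
    span R (range fun n => f^[n] x) ≤ p :=
  span_le.2 <| range_subset_iff.2 fun n => MapsTo.iterate hp n hx

theorem Submodule.apply_mem_span_range_iterate {R M : Type*} [Semiring R] [AddCommMonoid M]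
    [Module R M] (f : M →ₗ[R] M) (x : M) :
    ∀ y ∈ span R (range fun n => f^[n] x), f y ∈ span R (range fun n => f^[n] x) := by
  suffices span R (range fun n => f^[n] x) ≤ (span R (range fun n => f^[n] x)).comap f from
    fun y hy => this hy
  exact span_le.2 <| range_subset_iff.2 fun n =>
    subset_span ⟨n + 1, Function.iterate_succ_apply' f n x⟩

theorem Submodule.le_iSup_inf_maxGenEigenspace {K V : Type*} [Field K] [IsAlgClosed K]
    [AddCommGroup V] [Module K V] {p : Submodule K V} [FiniteDimensional K p]
    {f : Module.End K V} (hp : ∀ x ∈ p, f x ∈ p) :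
    p ≤ ⨆ μ, p ⊓ f.maxGenEigenspace μ := by
  have htop := congr_arg (Submodule.map p.subtype)
    (Module.End.iSup_maxGenEigenspace_eq_top (f.restrict hp))
  rw [Submodule.map_iSup, Submodule.map_top, Submodule.range_subtype] at htop
  exact htop.ge.trans <| iSup_mono fun μ => (Submodule.inf_genEigenspace f p hp).ge

theorem apply_mem_span_of_subset_unimodEigenvectors {X : Type*} [AddCommGroup X] [Module ℂ X]
    (f : X →ₗ[ℂ] X) {s : Set X} (hs : s ⊆ unimodEigenvectors f) :
    ∀ y ∈ Submodule.span ℂ s, f y ∈ Submodule.span ℂ s := by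
  suffices Submodule.span ℂ s ≤ (Submodule.span ℂ s).comap f from fun y hy => this hy
  refine Submodule.span_le.2 fun y hy => ?_
  obtain ⟨-, c, -, hc⟩ := hs hy
  rw [SetLike.mem_coe, Submodule.mem_comap, hc]
  exact Submodule.smul_mem _ c (Submodule.subset_span hy)

theorem RecPt.mapClusterPt_s17 {X : Type*} [TopologicalSpace X] [T1Space X] {T : X → X} {x : X}
    (hx : RecPt T x) : MapClusterPt x atTop fun n => T^[n] x := by
  rw [mapClusterPt_iff_frequently]
  intro s hs
  by_cases hper : ∃ p, 1 ≤ p ∧ T^[p] x = x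
  · obtain ⟨p, hp, hpx⟩ := hper
    refine frequently_atTop.2 fun N => ⟨p * N, Nat.le_mul_of_pos_left N hp, ?_⟩
    rw [Function.iterate_mul, Function.iterate_fixed hpx]
    exact mem_of_mem_nhds hs
  · push Not at hper
    refine frequently_atTop.2 fun N => ?_
    -- Without a period, the iterates `T^[m] x` with `1 ≤ m ≤ N` stay away from `x`.
    have hF : ((fun m => T^[m] x) '' Icc 1 N)ᶜ ∈ 𝓝 x := by
      refine ((finite_Icc 1 N).image _).isClosed.compl_mem_nhds ?_
      rintro ⟨m, hm, hmx⟩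
      exact hper m hm.1 hmx
    obtain ⟨_, ⟨hys, hyF⟩, n, rfl⟩ := mem_closure_iff_nhds.1 hx _ (inter_mem hs hF)
    refine ⟨n + 1, ?_, hys⟩
    by_contra! hn
    exact hyF ⟨n + 1, ⟨by omega, by omega⟩, rfl⟩

namespace ContinuousLinearMap

section Iterates

variable {R E : Type*} [CommSemiring R] [AddCommMonoid E] [Module R E] [TopologicalSpace E]
  (T : E →L[R] E) {μ : R}

theorem pow_apply_of_apply_eq_smul {w : E} (hw : T w = μ • w) (n : ℕ) :
    (T ^ n) w = μ ^ n • w := by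
  induction n with
  | zero => simp
  | succ n ih => rw [pow_succ', mul_apply_eq_comp, ih, map_smul, hw, smul_smul, pow_succ]

theorem pow_apply_of_apply_eq_smul_add {u w : E} (hw : T w = μ • w) (hu : T u = μ • (u + w))
    (n : ℕ) : (T ^ n) u = μ ^ n • (u + (n : R) • w) := by
  induction n with
  | zero => simp
  | succ n ih =>
    rw [pow_succ', mul_apply_eq_comp, ih, map_smul, map_add, map_smul, hu, hw, smul_smul, pow_succ]
    push_cast
    module

end Iterates

section Recurrent

variable {R E : Type*} [Semiring R] [AddCommMonoid E] [Module R E] [TopologicalSpace E]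
  [ContinuousAdd E] [ContinuousConstSMul R E]

def recurrentSubmodule (T : E →L[R] E) (l : Filter ℕ) : Submodule R E where
  carrier := {v | Tendsto (fun n => (T ^ n) v) l (𝓝 v)}
  add_mem' hu hv := by simpa only [mem_ofPred_eq, map_add] using hu.add hv
  zero_mem' := by simpa only [mem_ofPred_eq, map_zero] using tendsto_const_nhds
  smul_mem' c _ hv := by simpa only [mem_ofPred_eq, map_smul] using hv.const_smul c

variable {T : E →L[R] E} {l : Filter ℕ} {v : E}

theorem mem_recurrentSubmodule :
    v ∈ T.recurrentSubmodule l ↔ Tendsto (fun n => (T ^ n) v) l (𝓝 v) := Iff.rfl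

theorem apply_mem_recurrentSubmodule (hv : v ∈ T.recurrentSubmodule l) :
    T v ∈ T.recurrentSubmodule l := by
  have h := (T.continuous.tendsto v).comp hv
  rw [mem_recurrentSubmodule]
  refine h.congr fun n => ?_
  rw [Function.comp_apply, ← mul_apply_eq_comp, ← pow_succ', pow_succ, mul_apply_eq_comp]

end Recurrent

section Spectral

variable {𝕜 E : Type*} [RCLike 𝕜] [AddCommGroup E] [Module 𝕜 E] [TopologicalSpace E]
  [IsTopologicalAddGroup E] [ContinuousSMul 𝕜 E] [T2Space E] {l : Filter ℕ} [l.NeBot]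

theorem norm_eq_one_of_tendsto_pow_smul (hl : l ≤ atTop) {μ : 𝕜} {w : E} (hw : w ≠ 0)
    (h : Tendsto (fun n => μ ^ n • w) l (𝓝 w)) : ‖μ‖ = 1 := by
  have hpow : Tendsto (fun n => μ ^ n) l (𝓝 1) := by
    rw [(isClosedEmbedding_smul_left hw).isEmbedding.tendsto_nhds_iff]
    simpa only [Function.comp_def, one_smul] using h
  have hnorm : Tendsto (fun n => ‖μ‖ ^ n) l (𝓝 1) := by simpa using hpow.norm
  rcases lt_trichotomy ‖μ‖ 1 with hlt | heq | hgt
  · have h0 := (tendsto_pow_atTop_nhds_zero_of_lt_one (norm_nonneg μ) hlt).mono_left hl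
    exact absurd (tendsto_nhds_unique h0 hnorm) zero_ne_one
  · exact heq
  · exact absurd hnorm
      (not_tendsto_nhds_of_tendsto_atTop ((tendsto_pow_atTop_atTop_of_one_lt hgt).mono_left hl) 1)

theorem eq_zero_of_tendsto_pow_smul_add_natCast_smul (hl : l ≤ atTop) {μ : 𝕜} (hμ : ‖μ‖ = 1)
    {u w a : E} (h : Tendsto (fun n : ℕ => μ ^ n • (u + (n : 𝕜) • w)) l (𝓝 a)) : w = 0 := by
  have hμ0 : μ ≠ 0 := norm_ne_zero_iff.1 (by rw [hμ]; exact one_ne_zero)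
  have hinv : Tendsto (fun n : ℕ => (n : 𝕜)⁻¹) l (𝓝 0) :=
    tendsto_inv_atTop_nhds_zero_nat.mono_left hl
  have hc : Tendsto (fun n : ℕ => (μ ^ n * n)⁻¹) l (𝓝 0) := by
    rw [tendsto_zero_iff_norm_tendsto_zero] at hinv ⊢
    simpa [hμ] using hinv
  have hlim := (hc.smul h).sub (hinv.smul (tendsto_const_nhds (x := u)))
  rw [zero_smul, zero_smul, sub_zero] at hlim
  refine tendsto_const_nhds_iff.1 (hlim.congr' ?_)
  filter_upwards [hl (eventually_ge_atTop 1)] with n hn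
  have hn0 : (n : 𝕜) ≠ 0 := Nat.cast_ne_zero.2 (by omega)
  rw [smul_smul, show (μ ^ n * n)⁻¹ * μ ^ n = (n : 𝕜)⁻¹ by field_simp, smul_add, smul_smul,
    inv_mul_cancel₀ hn0, one_smul, add_sub_cancel_left]

variable {T : E →L[𝕜] E} {μ : 𝕜} {v : E}

theorem norm_eq_one_of_mem_recurrentSubmodule (hl : l ≤ atTop) (hv : v ∈ T.recurrentSubmodule l)
    (hv0 : v ≠ 0) (h : T v = μ • v) : ‖μ‖ = 1 :=
  norm_eq_one_of_tendsto_pow_smul hl hv0 <| by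
    simpa only [mem_recurrentSubmodule, pow_apply_of_apply_eq_smul T h] using hv

theorem apply_eq_smul_of_mem_recurrentSubmodule_of_apply_sub_smul_eq (hl : l ≤ atTop)
    (hv : v ∈ T.recurrentSubmodule l) (h : T (T v - μ • v) = μ • (T v - μ • v)) :
    T v = μ • v := by
  set w := T v - μ • v with hw
  by_contra hne
  have hw0 : w ≠ 0 := sub_ne_zero.2 hne
  have hμ : ‖μ‖ = 1 := norm_eq_one_of_mem_recurrentSubmodule hl
    (sub_mem (apply_mem_recurrentSubmodule hv) (Submodule.smul_mem _ μ hv)) hw0 h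
  have hμ0 : μ ≠ 0 := norm_ne_zero_iff.1 (by rw [hμ]; exact one_ne_zero)
  have hv' : T v = μ • (v + μ⁻¹ • w) := by
    rw [smul_add, smul_smul, mul_inv_cancel₀ hμ0, one_smul, hw]
    abel
  have hw' : T (μ⁻¹ • w) = μ • μ⁻¹ • w := by rw [map_smul, h, smul_comm]
  have hinvw : μ⁻¹ • w = 0 := eq_zero_of_tendsto_pow_smul_add_natCast_smul hl hμ <| by
    simpa only [mem_recurrentSubmodule, pow_apply_of_apply_eq_smul_add T hw' hv'] using hv
  exact hw0 ((smul_eq_zero.1 hinvw).resolve_left (inv_ne_zero hμ0))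

theorem apply_eq_smul_of_mem_recurrentSubmodule_of_mem_maxGenEigenspace (hl : l ≤ atTop)
    (hv : v ∈ T.recurrentSubmodule l) (hgen : v ∈ Module.End.maxGenEigenspace (T : E →ₗ[𝕜] E) μ) :
    T v = μ • v := by
  obtain ⟨k, hk⟩ := (Module.End.mem_maxGenEigenspace _ _ _).1 hgen
  clear hgen
  induction k generalizing v with
  | zero => simp_all
  | succ k ih =>
    refine apply_eq_smul_of_mem_recurrentSubmodule_of_apply_sub_smul_eq hl hv (ih ?_ ?_)
    · exact sub_mem (apply_mem_recurrentSubmodule hv) (Submodule.smul_mem _ μ hv)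
    · simpa [pow_succ] using hk

end Spectral

end ContinuousLinearMap

section Unimodular

variable {X : Type*} [AddCommGroup X] [Module ℂ X] [TopologicalSpace X] [IsTopologicalAddGroup X]
  [ContinuousSMul ℂ X] [T2Space X] {T : X →L[ℂ] X} {l : Filter ℕ} [l.NeBot]

theorem recurrentSubmodule_inf_maxGenEigenspace_le_span (hl : l ≤ atTop) (μ : ℂ) :
    T.recurrentSubmodule l ⊓ Module.End.maxGenEigenspace (T : X →ₗ[ℂ] X) μ ≤
      Submodule.span ℂ (unimodEigenvectors T) := by
  rintro v ⟨hv, hgen⟩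
  by_cases hv0 : v = 0
  · rw [hv0]
    exact Submodule.zero_mem _
  have heig := T.apply_eq_smul_of_mem_recurrentSubmodule_of_mem_maxGenEigenspace hl hv hgen
  exact Submodule.subset_span
    ⟨hv0, μ, T.norm_eq_one_of_mem_recurrentSubmodule hl hv hv0 heig, heig⟩

theorem le_span_unimodEigenvectors_of_le_recurrentSubmodule (hl : l ≤ atTop)
    {p : Submodule ℂ X} [FiniteDimensional ℂ p] (hp : ∀ y ∈ p, T y ∈ p)
    (hpl : p ≤ T.recurrentSubmodule l) : p ≤ Submodule.span ℂ (unimodEigenvectors T) :=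
  (Submodule.le_iSup_inf_maxGenEigenspace (f := (T : X →ₗ[ℂ] X)) hp).trans <| iSup_le fun μ =>
    (inf_le_inf_right _ hpl).trans (recurrentSubmodule_inf_maxGenEigenspace_le_span hl μ)

end Unimodular

theorem stmt17_general {X : Type*} [AddCommGroup X] [Module ℂ X] [TopologicalSpace X]
    [IsTopologicalAddGroup X] [ContinuousSMul ℂ X] [PolishSpace X]
    (T : X →L[ℂ] X) (x : X) (hx : RecPt (⇑T) x) :
    x ∈ Submodule.span ℂ (unimodEigenvectors (⇑T)) ↔
      FiniteDimensional ℂ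
        (Submodule.span ℂ (Set.range fun n : ℕ => (⇑T)^[n] x)) := by
  constructor
  · intro hxE
    obtain ⟨s, hsE, hxs⟩ := Submodule.mem_span_finite_of_mem_span hxE
    exact Submodule.finiteDimensional_of_le <| Submodule.span_range_iterate_le
      (apply_mem_span_of_subset_unimodEigenvectors (T : X →ₗ[ℂ] X) hsE) hxs
  · intro hfd
    obtain ⟨l, hl, hxl⟩ := mapClusterPt_iff_ultrafilter.1 hx.mapClusterPt_s17
    have hxV : x ∈ T.recurrentSubmodule l := by
      simpa only [ContinuousLinearMap.mem_recurrentSubmodule, pow_apply_eq_iterate] using hxl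
    refine le_span_unimodEigenvectors_of_le_recurrentSubmodule hl
      (p := T.recurrentSubmodule l ⊓ Submodule.span ℂ (range fun n => (⇑T)^[n] x))
      (fun y hy => ⟨T.apply_mem_recurrentSubmodule hy.1,
        Submodule.apply_mem_span_range_iterate (T : X →ₗ[ℂ] X) x y hy.2⟩)
      inf_le_left ⟨hxV, Submodule.subset_span ⟨0, rfl⟩⟩

/-- For a recurrent vector `x` of a continuous linear operator on a separable
infinite-dimensional complex F-space, `x` lies in the span of the unimodular
eigenvectors iff the span of its orbit is finite-dimensional. -/
theorem stmt17 {X : Type*} [AddCommGroup X] [Module ℂ X] [TopologicalSpace X]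
    [IsTopologicalAddGroup X] [ContinuousSMul ℂ X] [PolishSpace X]
    (hX : ¬ FiniteDimensional ℂ X)
    (T : X →L[ℂ] X) (x : X) (hx : RecPt (⇑T) x) :
    x ∈ Submodule.span ℂ (unimodEigenvectors (⇑T)) ↔
      FiniteDimensional ℂ
        (Submodule.span ℂ (Set.range fun n : ℕ => (⇑T)^[n] x)) :=
  stmt17_general T x hx
end
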